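/- arXiv:1708.09608 — 7 statements merged into one kernel-verified Lean document; each statement's English description precedes it below -/
import Mathlib

section
/- Let m ∈ ℝ^p. The following two statements are equivalent: (a) ∂V_β(m)/∂r ≥ 0 for all r ∈ ℝ^p with ‖r‖ = 1; (b) ∂V_β(m)/∂e_j ≥ 0 and ∂V_β(m)/∂(−e_j) ≥ 0 for every j = 1,…,p, where e_j is the j-th standard unit vector and ∂g(m)/∂r = lim_{h↓0}(g(m+hr) − g(m))/h denotes the one-sided directional derivative. -/
open MeasureTheory Matrix BigOperators Filter

noncomputable section

/-- The weighted Lasso objective `L(b) = ‖y − Xb‖² + 2∑ λ_j |b_j|`. -/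
def lassoL {n p : ℕ} (X : Matrix (Fin n) (Fin p) ℝ) (y : Fin n → ℝ)
    (lam : Fin p → ℝ) (b : Fin p → ℝ) : ℝ :=
  (∑ i, (y i - X.mulVec b i) ^ 2) + 2 * ∑ j, lam j * |b j|

/-- The recentered objective `V_β(u) = L(u + β) − L(β)`. -/
def lassoV {n p : ℕ} (X : Matrix (Fin n) (Fin p) ℝ) (y : Fin n → ℝ)
    (lam : Fin p → ℝ) (β : Fin p → ℝ) (u : Fin p → ℝ) : ℝ :=
  lassoL X y lam (u + β) - lassoL X y lam β

/-- `g` has one-sided directional derivative `D` at `m` in direction `r`. -/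
def HasDirDeriv {p : ℕ} (g : (Fin p → ℝ) → ℝ) (m r : Fin p → ℝ) (D : ℝ) : Prop :=
  Tendsto (fun h : ℝ => (g (m + h • r) - g m) / h) (nhdsWithin 0 (Set.Ioi 0)) (nhds D)

/-- one-sided derivative of `t ↦ |c + t r|` at `0⁺`. -/
def dabs (c r : ℝ) : ℝ := if c = 0 then |r| else if 0 < c then r else -r

lemma dabs_zero (c : ℝ) : dabs c 0 = 0 := by
  unfold dabs; split_ifs <;> simp

lemma tendsto_absdiff (c r : ℝ) :
    Tendsto (fun h : ℝ => (|c + h * r| - |c|) / h) (nhdsWithin 0 (Set.Ioi 0))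
      (nhds (dabs c r)) := by
  by_cases hc : c = 0
  · subst hc
    have hev : (fun _ : ℝ => |r|) =ᶠ[nhdsWithin 0 (Set.Ioi 0)]
        (fun h : ℝ => (|0 + h * r| - |0|) / h) := by
      filter_upwards [self_mem_nhdsWithin] with h hh
      have h0 : (0:ℝ) < h := hh
      rw [zero_add, abs_zero, sub_zero, abs_mul, abs_of_pos h0, mul_comm,
        mul_div_assoc, div_self h0.ne', mul_one]
    have : Tendsto (fun _ : ℝ => |r|) (nhdsWithin 0 (Set.Ioi 0)) (nhds (dabs 0 r)) := by
      simp [dabs]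
    exact this.congr' hev
  · rcases lt_or_gt_of_ne hc with hneg | hpos
    · -- c < 0
      have hδ : (0:ℝ) < -c / (|r| + 1) := div_pos (by linarith) (by positivity)
      have hev : (fun _ : ℝ => -r) =ᶠ[nhdsWithin 0 (Set.Ioi 0)]
          (fun h : ℝ => (|c + h * r| - |c|) / h) := by
        filter_upwards [Ioo_mem_nhdsGT_of_mem (Set.mem_Ico.2 ⟨le_refl 0, hδ⟩)] with h hh
        obtain ⟨h0, h1⟩ := hh
        have habs : |r| + 1 > 0 := by positivity
        have h2 : h * (|r| + 1) < -c := (lt_div_iff₀ habs).mp h1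
        have h3 : c + h * r < 0 := by nlinarith [abs_nonneg r, le_abs_self r, neg_abs_le r]
        rw [abs_of_neg h3, abs_of_neg hneg]
        field_simp
        ring
      have : Tendsto (fun _ : ℝ => -r) (nhdsWithin 0 (Set.Ioi 0)) (nhds (dabs c r)) := by
        simp [dabs, hc, not_lt.2 hneg.le, hneg.not_gt]
      exact this.congr' hev
    · -- c > 0
      have hδ : (0:ℝ) < c / (|r| + 1) := by positivity
      have hev : (fun _ : ℝ => r) =ᶠ[nhdsWithin 0 (Set.Ioi 0)]
          (fun h : ℝ => (|c + h * r| - |c|) / h) := by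
        filter_upwards [Ioo_mem_nhdsGT_of_mem (Set.mem_Ico.2 ⟨le_refl 0, hδ⟩)] with h hh
        obtain ⟨h0, h1⟩ := hh
        have habs : |r| + 1 > 0 := by positivity
        have h2 : h * (|r| + 1) < c := (lt_div_iff₀ habs).mp h1
        have h3 : 0 < c + h * r := by nlinarith [abs_nonneg r, le_abs_self r, neg_abs_le r]
        rw [abs_of_pos h3, abs_of_pos hpos]
        field_simp
        ring
      have : Tendsto (fun _ : ℝ => r) (nhdsWithin 0 (Set.Ioi 0)) (nhds (dabs c r)) := by
        simp [dabs, hc, hpos]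
      exact this.congr' hev

/-- The explicit value of the directional derivative of `lassoV`. -/
def Dval {n p : ℕ} (X : Matrix (Fin n) (Fin p) ℝ) (y : Fin n → ℝ)
    (lam : Fin p → ℝ) (β : Fin p → ℝ) (m r : Fin p → ℝ) : ℝ :=
  (∑ i, -2 * (y i - X.mulVec (m + β) i) * X.mulVec r i)
    + 2 * ∑ j, lam j * dabs ((m + β) j) (r j)

lemma hasDirDeriv_lassoV {n p : ℕ} (X : Matrix (Fin n) (Fin p) ℝ) (y : Fin n → ℝ)
    (lam : Fin p → ℝ) (β : Fin p → ℝ) (m r : Fin p → ℝ) :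
    HasDirDeriv (lassoV X y lam β) m r (Dval X y lam β m r) := by
  have key : ∀ h : ℝ, lassoL X y lam (m + h • r + β)
      = (∑ i, (y i - X.mulVec (m + β) i - h * X.mulVec r i) ^ 2)
        + 2 * ∑ j, lam j * |(m + β) j + h * r j| := by
    intro h
    have hmv : m + h • r + β = (m + β) + h • r := by abel
    unfold lassoL
    rw [hmv]
    congr 1
    · apply Finset.sum_congr rfl
      intro i _
      rw [Matrix.mulVec_add, Matrix.mulVec_smul]
      simp only [Pi.add_apply, Pi.smul_apply, smul_eq_mul]
      ring
  have hfun : ∀ h : ℝ,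
      (lassoV X y lam β (m + h • r) - lassoV X y lam β m) / h
        = (∑ i, ((y i - X.mulVec (m + β) i - h * X.mulVec r i) ^ 2
              - (y i - X.mulVec (m + β) i) ^ 2)) / h
          + (2 * ∑ j, lam j * (|(m + β) j + h * r j| - |(m + β) j|)) / h := by
    intro h
    rw [← add_div]
    congr 1
    have e1 : (∑ i, ((y i - X.mulVec (m + β) i - h * X.mulVec r i) ^ 2
          - (y i - X.mulVec (m + β) i) ^ 2))
        = (∑ i, (y i - X.mulVec (m + β) i - h * X.mulVec r i) ^ 2)
          - ∑ i, (y i - X.mulVec (m + β) i) ^ 2 := Finset.sum_sub_distrib _ _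
    have e2 : (∑ j, lam j * (|(m + β) j + h * r j| - |(m + β) j|))
        = (∑ j, lam j * |(m + β) j + h * r j|) - ∑ j, lam j * |(m + β) j| := by
      rw [← Finset.sum_sub_distrib]
      exact Finset.sum_congr rfl fun j _ => by ring
    rw [e1, e2]
    unfold lassoV
    rw [key h]
    unfold lassoL
    ring
  unfold HasDirDeriv
  apply Tendsto.congr (fun h => (hfun h).symm)
  unfold Dval
  apply Tendsto.add
  · -- quadratic part
    have hev : (fun h : ℝ => (∑ i, -2 * (y i - X.mulVec (m + β) i) * X.mulVec r i)
          + h * ∑ i, (X.mulVec r i) ^ 2) =ᶠ[nhdsWithin 0 (Set.Ioi 0)]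
        (fun h : ℝ => (∑ i, ((y i - X.mulVec (m + β) i - h * X.mulVec r i) ^ 2
              - (y i - X.mulVec (m + β) i) ^ 2)) / h) := by
      filter_upwards [self_mem_nhdsWithin] with h hh
      have h0 : (0:ℝ) < h := hh
      have : (∑ i, ((y i - X.mulVec (m + β) i - h * X.mulVec r i) ^ 2
              - (y i - X.mulVec (m + β) i) ^ 2))
          = h * ((∑ i, -2 * (y i - X.mulVec (m + β) i) * X.mulVec r i)
              + h * ∑ i, (X.mulVec r i) ^ 2) := by
        rw [mul_add, Finset.mul_sum, Finset.mul_sum, Finset.mul_sum, ← Finset.sum_add_distrib]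
        apply Finset.sum_congr rfl
        intro i _
        ring
      rw [this, mul_div_cancel_left₀ _ h0.ne']
    have hlim : Tendsto (fun h : ℝ => (∑ i, -2 * (y i - X.mulVec (m + β) i) * X.mulVec r i)
          + h * ∑ i, (X.mulVec r i) ^ 2) (nhdsWithin 0 (Set.Ioi 0))
        (nhds (∑ i, -2 * (y i - X.mulVec (m + β) i) * X.mulVec r i)) := by
      have : Tendsto (fun h : ℝ => (∑ i, -2 * (y i - X.mulVec (m + β) i) * X.mulVec r i)
          + h * ∑ i, (X.mulVec r i) ^ 2) (nhds 0)
          (nhds ((∑ i, -2 * (y i - X.mulVec (m + β) i) * X.mulVec r i)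
            + 0 * ∑ i, (X.mulVec r i) ^ 2)) :=
        tendsto_const_nhds.add (tendsto_id.mul tendsto_const_nhds)
      rw [zero_mul, add_zero] at this
      exact this.mono_left nhdsWithin_le_nhds
    exact hlim.congr' hev
  · -- abs part
    have hev : (fun h : ℝ => 2 * ∑ j, lam j * ((|(m + β) j + h * r j| - |(m + β) j|) / h))
        =ᶠ[nhdsWithin 0 (Set.Ioi 0)]
        (fun h : ℝ => (2 * ∑ j, lam j * (|(m + β) j + h * r j| - |(m + β) j|)) / h) := by
      filter_upwards with h
      rw [mul_div_assoc, Finset.sum_div]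
      congr 1
      apply Finset.sum_congr rfl
      intro j _
      rw [mul_div_assoc]
    have hlim : Tendsto (fun h : ℝ => 2 * ∑ j, lam j * ((|(m + β) j + h * r j| - |(m + β) j|) / h))
        (nhdsWithin 0 (Set.Ioi 0)) (nhds (2 * ∑ j, lam j * dabs ((m + β) j) (r j))) := by
      apply Tendsto.const_mul
      exact tendsto_finset_sum _ fun j _ => (tendsto_absdiff ((m + β) j) (r j)).const_mul (lam j)
    exact hlim.congr' hev

lemma dirDeriv_unique {p : ℕ} {g : (Fin p → ℝ) → ℝ} {m r : Fin p → ℝ} {D D' : ℝ}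
    (h : HasDirDeriv g m r D) (h' : HasDirDeriv g m r D') : D = D' :=
  tendsto_nhds_unique h h'

lemma Dval_eq_sum {n p : ℕ} (X : Matrix (Fin n) (Fin p) ℝ) (y : Fin n → ℝ)
    (lam : Fin p → ℝ) (β : Fin p → ℝ) (m r : Fin p → ℝ) :
    Dval X y lam β m r
      = ∑ j, ((∑ i, -2 * (y i - X.mulVec (m + β) i) * X i j) * r j
          + 2 * lam j * dabs ((m + β) j) (r j)) := by
  unfold Dval
  rw [Finset.sum_add_distrib]
  congr 1
  · have hmv : ∀ i, X.mulVec r i = ∑ j, X i j * r j := fun i => rfl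
    calc ∑ i, -2 * (y i - X.mulVec (m + β) i) * X.mulVec r i
        = ∑ i, ∑ j, -2 * (y i - X.mulVec (m + β) i) * X i j * r j := by
          apply Finset.sum_congr rfl; intro i _
          rw [hmv i, Finset.mul_sum]
          exact Finset.sum_congr rfl fun j _ => by ring
      _ = ∑ j, ∑ i, -2 * (y i - X.mulVec (m + β) i) * X i j * r j := Finset.sum_comm
      _ = ∑ j, (∑ i, -2 * (y i - X.mulVec (m + β) i) * X i j) * r j := by
          apply Finset.sum_congr rfl; intro j _; rw [Finset.sum_mul]
  · rw [Finset.mul_sum]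
    exact Finset.sum_congr rfl fun j _ => by ring

/-- decomposition of a coordinate function into the two one-sided directions -/
lemma coord_decomp (q l c t : ℝ) :
    q * t + 2 * l * dabs c t
      = max t 0 * (q * 1 + 2 * l * dabs c 1)
        + max (-t) 0 * (q * (-1) + 2 * l * dabs c (-1)) := by
  unfold dabs
  rcases le_total 0 t with ht | ht
  · rw [max_eq_left ht, max_eq_right (by linarith : -t ≤ 0)]
    split_ifs <;> simp [abs_of_nonneg ht] <;> ring
  · rw [max_eq_right ht, max_eq_left (by linarith : 0 ≤ -t)]
    split_ifs <;> simp [abs_of_nonpos ht] <;> ring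

lemma Dval_single {n p : ℕ} (X : Matrix (Fin n) (Fin p) ℝ) (y : Fin n → ℝ)
    (lam : Fin p → ℝ) (β : Fin p → ℝ) (m : Fin p → ℝ) (j : Fin p) :
    Dval X y lam β m (Pi.single j 1)
      = (∑ i, -2 * (y i - X.mulVec (m + β) i) * X i j) * 1
          + 2 * lam j * dabs ((m + β) j) 1 := by
  rw [Dval_eq_sum]
  rw [Finset.sum_eq_single j]
  · rw [Pi.single_eq_same]
  · intro k _ hk
    rw [Pi.single_eq_of_ne hk, dabs_zero]
    ring
  · intro hj; exact absurd (Finset.mem_univ j) hj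

lemma Dval_single_neg {n p : ℕ} (X : Matrix (Fin n) (Fin p) ℝ) (y : Fin n → ℝ)
    (lam : Fin p → ℝ) (β : Fin p → ℝ) (m : Fin p → ℝ) (j : Fin p) :
    Dval X y lam β m (-(Pi.single j 1))
      = (∑ i, -2 * (y i - X.mulVec (m + β) i) * X i j) * (-1)
          + 2 * lam j * dabs ((m + β) j) (-1) := by
  rw [Dval_eq_sum]
  rw [Finset.sum_eq_single j]
  · rw [Pi.neg_apply, Pi.single_eq_same]
  · intro k _ hk
    rw [Pi.neg_apply, Pi.single_eq_of_ne hk, neg_zero, dabs_zero]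
    ring
  · intro hj; exact absurd (Finset.mem_univ j) hj

lemma Dval_nonneg {n p : ℕ} (X : Matrix (Fin n) (Fin p) ℝ) (y : Fin n → ℝ)
    (lam : Fin p → ℝ) (β : Fin p → ℝ) (m r : Fin p → ℝ)
    (h1 : ∀ j, 0 ≤ Dval X y lam β m (Pi.single j 1))
    (h2 : ∀ j, 0 ≤ Dval X y lam β m (-(Pi.single j 1))) :
    0 ≤ Dval X y lam β m r := by
  rw [Dval_eq_sum]
  apply Finset.sum_nonneg
  intro j _
  rw [coord_decomp]
  have e1 := h1 j; rw [Dval_single] at e1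
  have e2 := h2 j; rw [Dval_single_neg] at e2
  have m1 : (0:ℝ) ≤ max (r j) 0 := le_max_right _ _
  have m2 : (0:ℝ) ≤ max (-(r j)) 0 := le_max_right _ _
  exact add_nonneg (mul_nonneg m1 e1) (mul_nonneg m2 e2)

lemma single_norm {p : ℕ} (j : Fin p) :
    Real.sqrt (∑ k, ((Pi.single j 1 : Fin p → ℝ) k) ^ 2) = 1 := by
  have : (∑ k, ((Pi.single j 1 : Fin p → ℝ) k) ^ 2) = 1 := by
    rw [Finset.sum_eq_single j]
    · rw [Pi.single_eq_same]; norm_num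
    · intro k _ hk; rw [Pi.single_eq_of_ne hk]; ring
    · intro hj; exact absurd (Finset.mem_univ j) hj
  rw [this, Real.sqrt_one]

lemma single_norm_neg {p : ℕ} (j : Fin p) :
    Real.sqrt (∑ k, ((-(Pi.single j 1 : Fin p → ℝ)) k) ^ 2) = 1 := by
  have : (∑ k, ((-(Pi.single j 1 : Fin p → ℝ)) k) ^ 2) = ∑ k, ((Pi.single j 1 : Fin p → ℝ) k) ^ 2 := by
    exact Finset.sum_congr rfl fun k _ => by rw [Pi.neg_apply]; ring
  rw [this]
  exact single_norm j

/-- the one-sided directional derivatives of `V_β` at `m` are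
nonnegative in all unit directions if and only if they are nonnegative in the
directions `e_j` and `−e_j` for every `j = 1,…,p`. -/
theorem dirDeriv_nonneg_iff_coordinate_directions
    {n p : ℕ} (X : Matrix (Fin n) (Fin p) ℝ) (y : Fin n → ℝ)
    (lam : Fin p → ℝ) (hlam : ∀ j, 0 ≤ lam j) (β : Fin p → ℝ)
    (m : Fin p → ℝ) :
    (∀ r : Fin p → ℝ, Real.sqrt (∑ j, r j ^ 2) = 1 →
        ∃ D : ℝ, 0 ≤ D ∧ HasDirDeriv (lassoV X y lam β) m r D)
    ↔ (∀ j : Fin p,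
        (∃ D : ℝ, 0 ≤ D ∧ HasDirDeriv (lassoV X y lam β) m (Pi.single j 1) D)
        ∧ (∃ D : ℝ, 0 ≤ D ∧ HasDirDeriv (lassoV X y lam β) m (-(Pi.single j 1)) D)) := by
  constructor
  · intro H j
    exact ⟨H _ (single_norm j), H _ (single_norm_neg j)⟩
  · intro H r _
    refine ⟨Dval X y lam β m r, ?_, hasDirDeriv_lassoV X y lam β m r⟩
    apply Dval_nonneg
    · intro j
      obtain ⟨D, hD, hd⟩ := (H j).1
      rwa [← dirDeriv_unique hd (hasDirDeriv_lassoV X y lam β m _)]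
    · intro j
      obtain ⟨D, hD, hd⟩ := (H j).2
      rwa [← dirDeriv_unique hd (hasDirDeriv_lassoV X y lam β m _)]


end
end

section
/- Assume X has full column rank p and let β̂_LS = (X'X)^{−1}X'y. For each b ∈ ℝ^p, letting d = sgn(b) with partition {D_−, D_+, D_0}, define S(b) = {z ∈ ℝ^p : (X'Xz)_j = (X'Xb)_j + sgn(b_j)λ_j for j ∈ D_− ∪ D_+, and |(X'X(z−b))_j| ≤ λ_j for j ∈ D_0}. Then for every y ∈ ℝ^n: β̂_L = b if and only if β̂_LS ∈ S(b). Moreover, the sets S(b) and S(b') are disjoint whenever b ≠ b'. -/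
open MeasureTheory Matrix BigOperators

noncomputable section

namespace LassoAux

variable {n p : ℕ}

/-- The KKT conditions with "data vector" `w` playing the role of `X'y`. -/
def KKT (X : Matrix (Fin n) (Fin p) ℝ) (lam : Fin p → ℝ) (w : Fin p → ℝ)
    (b : Fin p → ℝ) : Prop :=
  ∀ j, (b j ≠ 0 → w j = (Xᵀ * X).mulVec b j + Real.sign (b j) * lam j)
    ∧ (b j = 0 → |w j - (Xᵀ * X).mulVec b j| ≤ lam j)

lemma expand (X : Matrix (Fin n) (Fin p) ℝ) (y : Fin n → ℝ) (lam b r : Fin p → ℝ) :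
    lassoL X y lam (b + r)
      = lassoL X y lam b + (∑ i, (X.mulVec r i) ^ 2)
        - 2 * ((Xᵀ.mulVec y - (Xᵀ * X).mulVec b) ⬝ᵥ r)
        + 2 * ∑ j, lam j * (|b j + r j| - |b j|) := by
  have hd : (Xᵀ.mulVec y - (Xᵀ * X).mulVec b) ⬝ᵥ r
      = ∑ i, (y i - X.mulVec b i) * X.mulVec r i := by
    have : ∑ i, (y i - X.mulVec b i) * X.mulVec r i
        = (y - X.mulVec b) ⬝ᵥ (X.mulVec r) := by
      simp [dotProduct]
    rw [this, dotProduct_mulVec, ← mulVec_transpose, mulVec_sub, mulVec_mulVec]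
  unfold lassoL
  rw [hd]
  have e1 : ∑ i, (y i - X.mulVec (b + r) i) ^ 2
      = ∑ i, ((y i - X.mulVec b i) ^ 2
          - 2 * ((y i - X.mulVec b i) * X.mulVec r i) + (X.mulVec r i) ^ 2) := by
    refine Finset.sum_congr rfl fun i _ => ?_
    simp only [mulVec_add, Pi.add_apply]
    ring
  have e2 : ∑ j, lam j * |(b + r) j|
      = (∑ j, lam j * |b j|) + ∑ j, lam j * (|b j + r j| - |b j|) := by
    rw [← Finset.sum_add_distrib]
    refine Finset.sum_congr rfl fun j _ => ?_
    simp only [Pi.add_apply]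
    ring
  rw [e1, e2, Finset.sum_add_distrib, Finset.sum_sub_distrib, ← Finset.mul_sum]
  ring

lemma kkt_strictMin (X : Matrix (Fin n) (Fin p) ℝ) (lam : Fin p → ℝ)
    (hlam : ∀ j, 0 ≤ lam j) (y : Fin n → ℝ)
    (hinj : ∀ v : Fin p → ℝ, X.mulVec v = 0 → v = 0)
    (b : Fin p → ℝ) (hb : KKT X lam (Xᵀ.mulVec y) b) :
    ∀ b', b' ≠ b → lassoL X y lam b < lassoL X y lam b' := by
  intro b' hne
  have hb' : b' = b + (b' - b) := by abel
  rw [hb', expand]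
  set r := b' - b with hr
  have hrne : r ≠ 0 := sub_ne_zero.mpr hne
  have h1 : 0 < ∑ i, (X.mulVec r i) ^ 2 := by
    have hXr : X.mulVec r ≠ 0 := fun h => hrne (hinj r h)
    obtain ⟨i, hi⟩ := Function.ne_iff.mp hXr
    exact Finset.sum_pos' (fun i _ => sq_nonneg _)
      ⟨i, Finset.mem_univ i, pow_two_pos_of_ne_zero hi⟩
  have h2 : (Xᵀ.mulVec y - (Xᵀ * X).mulVec b) ⬝ᵥ r
      ≤ ∑ j, lam j * (|b j + r j| - |b j|) := by
    rw [dotProduct]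
    refine Finset.sum_le_sum fun j _ => ?_
    rcases eq_or_ne (b j) 0 with h0 | h0
    · have hDj := (hb j).2 h0
      have : (Xᵀ.mulVec y - (Xᵀ * X).mulVec b) j * r j
          ≤ |(Xᵀ.mulVec y - (Xᵀ * X).mulVec b) j| * |r j| := by
        calc _ ≤ |(Xᵀ.mulVec y - (Xᵀ * X).mulVec b) j * r j| := le_abs_self _
        _ = _ := abs_mul _ _
      have hDj' : |(Xᵀ.mulVec y - (Xᵀ * X).mulVec b) j| ≤ lam j := by
        simpa [Pi.sub_apply] using hDj
      have := this.trans (mul_le_mul_of_nonneg_right hDj' (abs_nonneg _))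
      simpa [h0] using this
    · have heq := (hb j).1 h0
      have hD : (Xᵀ.mulVec y - (Xᵀ * X).mulVec b) j = Real.sign (b j) * lam j := by
        simp [Pi.sub_apply, heq]
      rw [hD]
      have hs : Real.sign (b j) * r j ≤ |b j + r j| - |b j| := by
        rcases h0.lt_or_gt with h | h
        · rw [Real.sign_of_neg h]
          nlinarith [neg_abs_le (b j + r j), abs_of_neg h]
        · rw [Real.sign_of_pos h]
          nlinarith [le_abs_self (b j + r j), abs_of_pos h]
      calc Real.sign (b j) * lam j * r j = lam j * (Real.sign (b j) * r j) := by ring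
      _ ≤ lam j * (|b j + r j| - |b j|) := mul_le_mul_of_nonneg_left hs (hlam j)
  linarith

lemma min_kkt (X : Matrix (Fin n) (Fin p) ℝ) (lam : Fin p → ℝ) (y : Fin n → ℝ)
    (b : Fin p → ℝ) (hmin : ∀ b', lassoL X y lam b ≤ lassoL X y lam b') :
    KKT X lam (Xᵀ.mulVec y) b := by
  intro j
  set D : Fin p → ℝ := Xᵀ.mulVec y - (Xᵀ * X).mulVec b with hDdef
  set C : ℝ := ∑ i, (X i j) ^ 2 with hCdef
  have hC : 0 ≤ C := Finset.sum_nonneg fun _ _ => sq_nonneg _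
  have key : ∀ t : ℝ,
      0 ≤ C * t ^ 2 - 2 * (D j * t) + 2 * (lam j * (|b j + t| - |b j|)) := by
    intro t
    have h := hmin (b + Pi.single j t)
    rw [expand] at h
    have e1 : ∑ i, (X.mulVec (Pi.single j t) i) ^ 2 = C * t ^ 2 := by
      rw [hCdef, Finset.sum_mul]
      refine Finset.sum_congr rfl fun i _ => ?_
      rw [mulVec_single]
      simp only [Pi.smul_apply, op_smul_eq_mul, Matrix.col_apply]
      ring
    have e2 : D ⬝ᵥ Pi.single j t = D j * t := dotProduct_single _ _ _
    have e3 : ∑ k, lam k * (|b k + (Pi.single j t : Fin p → ℝ) k| - |b k|)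
        = lam j * (|b j + t| - |b j|) := by
      rw [Finset.sum_eq_single j]
      · simp
      · intro k _ hk
        simp [Pi.single_apply, hk]
      · intro h; exact absurd (Finset.mem_univ j) h
    rw [e1, ← hDdef, e2, e3] at h
    linarith
  constructor
  · intro h0
    have habs_lin : ∀ t : ℝ, |t| ≤ |b j| → |b j + t| - |b j| = Real.sign (b j) * t := by
      intro t ht
      rcases h0.lt_or_gt with hbj | hbj
      · rw [Real.sign_of_neg hbj]
        rw [abs_of_neg hbj] at ht
        have h1 : b j + t ≤ 0 := by
          have := le_abs_self t
          linarith
        rw [abs_of_nonpos h1, abs_of_neg hbj]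
        ring
      · rw [Real.sign_of_pos hbj]
        rw [abs_of_pos hbj] at ht
        have h1 : 0 ≤ b j + t := by
          have := neg_abs_le t
          linarith
        rw [abs_of_nonneg h1, abs_of_pos hbj]
        ring
    have hc : D j - Real.sign (b j) * lam j = 0 := by
      have habs : ∀ ε : ℝ, 0 < ε → |D j - Real.sign (b j) * lam j| ≤ 0 + ε := by
        intro ε hε
        set s : ℝ := min |b j| (2 * ε / (C + 1)) with hsdef
        have hspos : 0 < s := lt_min (abs_pos.mpr h0) (by positivity)
        have hs1 : s ≤ |b j| := min_le_left _ _
        have hsC : s * C ≤ 2 * ε := by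
          calc s * C ≤ (2 * ε / (C + 1)) * C :=
                mul_le_mul_of_nonneg_right (min_le_right _ _) hC
          _ ≤ 2 * ε := by
                rw [div_mul_eq_mul_div, div_le_iff₀ (by positivity)]
                nlinarith
        have k1 := key s
        have k2 := key (-s)
        rw [habs_lin s (by rw [abs_of_pos hspos]; exact hs1)] at k1
        rw [habs_lin (-s) (by rw [abs_neg, abs_of_pos hspos]; exact hs1)] at k2
        have hCs : C * s ^ 2 ≤ 2 * ε * s := by
          have := mul_le_mul_of_nonneg_right hsC hspos.le
          nlinarith
        rw [zero_add, abs_le]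
        constructor <;> nlinarith [k1, k2, hCs, hspos]
      have : |D j - Real.sign (b j) * lam j| ≤ 0 := le_of_forall_pos_le_add habs
      have := le_antisymm this (abs_nonneg _)
      exact abs_eq_zero.mp this
    have hD : D j = Xᵀ.mulVec y j - (Xᵀ * X).mulVec b j := by rw [hDdef]; rfl
    rw [hD] at hc
    linarith
  · intro h0
    have habs : ∀ ε : ℝ, 0 < ε → |D j| ≤ lam j + ε := by
      intro ε hε
      set s : ℝ := 2 * ε / (C + 1) with hsdef
      have hspos : 0 < s := by positivity
      have hsC : s * C ≤ 2 * ε := by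
        rw [hsdef, div_mul_eq_mul_div, div_le_iff₀ (by positivity)]
        nlinarith
      have k1 := key s
      have k2 := key (-s)
      simp only [h0, zero_add, abs_zero, sub_zero] at k1 k2
      rw [abs_of_pos hspos] at k1
      rw [abs_neg, abs_of_pos hspos] at k2
      have hCs : C * s ^ 2 ≤ 2 * ε * s := by
        have := mul_le_mul_of_nonneg_right hsC hspos.le
        nlinarith
      rw [abs_le]
      constructor <;> nlinarith [k1, k2, hCs, hspos]
    have h1 : |D j| ≤ lam j := le_of_forall_pos_le_add habs
    have hD : D j = Xᵀ.mulVec y j - (Xᵀ * X).mulVec b j := by rw [hDdef]; rfl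
    rw [hD] at h1
    exact h1

end LassoAux


/-- The shrinkage area `S(b)`: for `d = sgn(b)`,
`S(b) = {z : (X'Xz)_j = (X'Xb)_j + sgn(b_j)λ_j on D₋∪D₊, |(X'X(z−b))_j| ≤ λ_j on D₀}`. -/
def shrinkArea {n p : ℕ} (X : Matrix (Fin n) (Fin p) ℝ) (lam : Fin p → ℝ)
    (b : Fin p → ℝ) : Set (Fin p → ℝ) :=
  {z | ∀ j : Fin p,
    (b j ≠ 0 →
      (Xᵀ * X).mulVec z j = (Xᵀ * X).mulVec b j + Real.sign (b j) * lam j)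
    ∧ (b j = 0 → |(Xᵀ * X).mulVec (z - b) j| ≤ lam j)}

/-- with `X` of full column rank and `β̂_LS = (X'X)⁻¹X'y`,
`β̂_L = b ⟺ β̂_LS ∈ S(b)`, and the sets `S(b)` are pairwise disjoint. -/
theorem lasso_shrinkage_areas
    {n p : ℕ} (X : Matrix (Fin n) (Fin p) ℝ) (hX : X.rank = p)
    (lam : Fin p → ℝ) (hlam : ∀ j, 0 ≤ lam j)
    (y : Fin n → ℝ) (βL : Fin p → ℝ)
    (hβL : ∀ b : Fin p → ℝ, lassoL X y lam βL ≤ lassoL X y lam b) :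
    (∀ b : Fin p → ℝ,
      βL = b ↔ (Xᵀ * X)⁻¹.mulVec (Xᵀ.mulVec y) ∈ shrinkArea X lam b)
    ∧ (∀ b b' : Fin p → ℝ, b ≠ b' →
        shrinkArea X lam b ∩ shrinkArea X lam b' = ∅) := by
  classical
  have hinj : ∀ v : Fin p → ℝ, X.mulVec v = 0 → v = 0 := by
    intro v hv
    have hker : LinearMap.ker X.mulVecLin = ⊥ := by
      have h1 := LinearMap.finrank_range_add_finrank_ker X.mulVecLin
      rw [Module.finrank_fin_fun] at h1
      have h2 : Module.finrank ℝ (LinearMap.range X.mulVecLin) = p := hX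
      rw [h2] at h1
      have h3 : Module.finrank ℝ (LinearMap.ker X.mulVecLin) = 0 := by omega
      exact Submodule.finrank_eq_zero.mp h3
    have hmem : v ∈ LinearMap.ker X.mulVecLin := by
      simpa [LinearMap.mem_ker, Matrix.mulVecLin_apply] using hv
    rw [hker] at hmem
    simpa using hmem
  have hdet : IsUnit (Xᵀ * X).det := by
    rw [isUnit_iff_ne_zero]
    intro h
    obtain ⟨v, hv0, hv⟩ := Matrix.exists_mulVec_eq_zero_iff.mpr h
    have hmem : v ∈ LinearMap.ker (Xᵀ * X).mulVecLin :=
      LinearMap.mem_ker.mpr (by rw [Matrix.mulVecLin_apply]; exact hv)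
    rw [Matrix.ker_mulVecLin_transpose_mul_self] at hmem
    exact hv0 (hinj v (by
      simpa [LinearMap.mem_ker, Matrix.mulVecLin_apply] using hmem))
  have hGLS : (Xᵀ * X).mulVec ((Xᵀ * X)⁻¹.mulVec (Xᵀ.mulVec y)) = Xᵀ.mulVec y := by
    rw [Matrix.mulVec_mulVec, Matrix.mul_nonsing_inv _ hdet, Matrix.one_mulVec]
  have hmemKKT : ∀ (z b : Fin p → ℝ),
      z ∈ shrinkArea X lam b ↔ LassoAux.KKT X lam ((Xᵀ * X).mulVec z) b := by
    intro z b
    unfold shrinkArea LassoAux.KKT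
    simp only [Set.mem_setOf_eq]
    refine forall_congr' fun j => and_congr Iff.rfl (imp_congr Iff.rfl ?_)
    rw [Matrix.mulVec_sub]
    simp [Pi.sub_apply]
  constructor
  · intro b
    rw [hmemKKT, hGLS]
    constructor
    · rintro rfl
      exact LassoAux.min_kkt X lam y βL hβL
    · intro h
      by_contra hne
      exact absurd (hβL b)
        (not_le.mpr (LassoAux.kkt_strictMin X lam hlam y hinj b h βL hne))
  · intro b b' hne
    ext z
    simp only [Set.mem_inter_iff, Set.mem_empty_iff_false, iff_false, not_and]
    intro hz hz'
    rw [hmemKKT] at hz hz'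
    have hGz : Xᵀ.mulVec (X.mulVec z) = (Xᵀ * X).mulVec z := Matrix.mulVec_mulVec _ _ _
    rw [← hGz] at hz hz'
    have h1 := LassoAux.kkt_strictMin X lam hlam (X.mulVec z) hinj b hz b' (Ne.symm hne)
    have h2 := LassoAux.kkt_strictMin X lam hlam (X.mulVec z) hinj b' hz' b hne
    linarith


end
end

section
/- Let X ∈ ℝ^{n×p} be arbitrary and λ_1,…,λ_p ≥ 0. For M ⊆ {1,…,p} define 𝓑_M = ∏_{j=1}^p C_j with C_j = {−λ_j, λ_j} for j ∈ M and C_j = [−λ_j, λ_j] for j ∉ M. Then: (i) there exists y ∈ ℝ^n and a global minimizer b of L(·; y) with {j : b_j ≠ 0} = M if and only if col(X') ∩ 𝓑_M ≠ ∅; (ii) 𝓑_{M̃} ⊆ 𝓑_M whenever M ⊆ M̃. -/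
open MeasureTheory Matrix BigOperators

noncomputable section

/-- The set `𝓑_M = ∏_j C_j` with `C_j = {−λ_j, λ_j}` for `j ∈ M` and
`C_j = [−λ_j, λ_j]` for `j ∉ M`. -/
def boxFace {p : ℕ} (lam : Fin p → ℝ) (M : Finset (Fin p)) : Set (Fin p → ℝ) :=
  {v | ∀ j : Fin p,
    if j ∈ M then (v j = -(lam j) ∨ v j = lam j)
    else v j ∈ Set.Icc (-(lam j)) (lam j)}

/-- Quadratic expansion of the Lasso objective around `b`. -/
lemma lasso_expand {n p : ℕ} (X : Matrix (Fin n) (Fin p) ℝ) (y : Fin n → ℝ)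
    (lam : Fin p → ℝ) (b b' : Fin p → ℝ) :
    lassoL X y lam b' = lassoL X y lam b + (∑ i, (X.mulVec (b' - b) i) ^ 2)
      + 2 * (∑ j, (lam j * |b' j| - Xᵀ.mulVec (y - X.mulVec b) j * b' j))
      - 2 * (∑ j, (lam j * |b j| - Xᵀ.mulVec (y - X.mulVec b) j * b j)) := by
  have hdot : ∑ i, (y i - X.mulVec b i) * X.mulVec (b' - b) i
      = ∑ j, Xᵀ.mulVec (y - X.mulVec b) j * (b' j - b j) := by
    have h := Matrix.dotProduct_mulVec (y - X.mulVec b) X (b' - b)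
    rw [← Matrix.mulVec_transpose] at h
    simpa [dotProduct, Pi.sub_apply] using h
  have hmv : ∀ i, X.mulVec (b' - b) i = X.mulVec b' i - X.mulVec b i := fun i => by
    rw [Matrix.mulVec_sub]; rfl
  have expand : ∀ i ∈ Finset.univ, (y i - X.mulVec b' i) ^ 2 =
      (y i - X.mulVec b i) ^ 2 - 2 * ((y i - X.mulVec b i) * X.mulVec (b' - b) i)
        + (X.mulVec (b' - b) i) ^ 2 := fun i _ => by rw [hmv i]; ring
  unfold lassoL
  rw [Finset.sum_congr rfl expand, Finset.sum_add_distrib, Finset.sum_sub_distrib,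
    ← Finset.mul_sum, hdot]
  simp only [Finset.sum_sub_distrib, mul_sub]
  ring

/-- If a quadratic-plus-linear expression is nonnegative for all small positive `t`,
the linear coefficient is nonnegative. -/
lemma slope_core (a C r : ℝ) (ha : 0 ≤ a) (hr : 0 < r)
    (h : ∀ t : ℝ, 0 < t → t < r → 0 ≤ a * t ^ 2 + 2 * C * t) : 0 ≤ C := by
  by_contra hC
  push_neg at hC
  set m := min (r / 2) (-C / (a + 1)) with hm
  have hm0 : 0 < m := lt_min (by linarith) (div_pos (by linarith) (by linarith))
  have hmr : m < r := lt_of_le_of_lt (min_le_left _ _) (by linarith)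
  have h1 := h m hm0 hmr
  have h2 : (a + 1) * m ≤ -C := by
    have h3 : m ≤ -C / (a + 1) := min_le_right _ _
    have h4 : (a + 1) * m ≤ (a + 1) * (-C / (a + 1)) :=
      mul_le_mul_of_nonneg_left h3 (by linarith)
    have h5 : (a + 1) * (-C / (a + 1)) = -C := by field_simp
    linarith
  nlinarith [mul_le_mul_of_nonneg_right h2 (le_of_lt hm0), mul_pos hm0 hm0,
    mul_pos hm0 (neg_pos.2 hC)]

/-- Perturbation inequality derived from global minimality. -/
lemma perturb_ineq {n p : ℕ} (X : Matrix (Fin n) (Fin p) ℝ) (y : Fin n → ℝ)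
    (lam : Fin p → ℝ) (b : Fin p → ℝ)
    (hmin : ∀ b', lassoL X y lam b ≤ lassoL X y lam b') (j : Fin p) (t : ℝ) :
    0 ≤ (∑ i, (X i j) ^ 2) * t ^ 2
      + 2 * (lam j * (|b j + t| - |b j|) - Xᵀ.mulVec (y - X.mulVec b) j * t) := by
  have h := hmin (b + Pi.single j t)
  have hexp := lasso_expand X y lam b (b + Pi.single j t)
  rw [hexp] at h
  set w := Xᵀ.mulVec (y - X.mulVec b) with hw
  have hd : b + Pi.single j t - b = Pi.single j t := by abel
  rw [hd] at h
  have hmv : ∀ i, X.mulVec (Pi.single j t) i = X i j * t := fun i => by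
    simp [Matrix.mulVec_single]
  have hsq : ∑ i, (X.mulVec (Pi.single j t) i) ^ 2 = (∑ i, (X i j) ^ 2) * t ^ 2 := by
    rw [Finset.sum_mul]
    exact Finset.sum_congr rfl fun i _ => by rw [hmv i]; ring
  rw [hsq] at h
  set b2 : Fin p → ℝ := b + Pi.single j t with hb2
  have hb2a : ∀ j', b2 j' = b j' + (Pi.single j t : Fin p → ℝ) j' := fun j' => rfl
  have hsum : (∑ j', (lam j' * |b2 j'| - w j' * b2 j'))
      - (∑ j', (lam j' * |b j'| - w j' * b j'))
      = lam j * (|b j + t| - |b j|) - w j * t := by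
    rw [← Finset.sum_sub_distrib]
    rw [Finset.sum_eq_single j]
    · rw [hb2a j, Pi.single_eq_same]; ring
    · intro j' _ hj'
      rw [hb2a j', Pi.single_eq_of_ne hj']; simp
    · intro hju; exact absurd (Finset.mem_univ j) hju
  linarith [h, hsum.symm.le, hsum.le]

/-- KKT necessity, coordinatewise. -/
lemma kkt_coord {n p : ℕ} (X : Matrix (Fin n) (Fin p) ℝ) (y : Fin n → ℝ)
    (lam : Fin p → ℝ) (hlam : ∀ j, 0 ≤ lam j) (b : Fin p → ℝ)
    (hmin : ∀ b', lassoL X y lam b ≤ lassoL X y lam b') (j : Fin p) :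
    (b j = 0 → |Xᵀ.mulVec (y - X.mulVec b) j| ≤ lam j)
    ∧ (b j ≠ 0 → Xᵀ.mulVec (y - X.mulVec b) j = -(lam j)
        ∨ Xᵀ.mulVec (y - X.mulVec b) j = lam j) := by
  set w := Xᵀ.mulVec (y - X.mulVec b) with hw
  set a := ∑ i, (X i j) ^ 2 with ha
  have ha0 : 0 ≤ a := Finset.sum_nonneg fun i _ => sq_nonneg _
  have hper := perturb_ineq X y lam b hmin j
  constructor
  · intro hb0
    have h1 : 0 ≤ lam j - w j := by
      apply slope_core a (lam j - w j) 1 ha0 one_pos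
      intro t ht0 _
      have := hper t
      rw [hb0] at this
      simp only [zero_add, abs_zero, sub_zero] at this
      rw [abs_of_pos ht0] at this
      nlinarith
    have h2 : 0 ≤ lam j + w j := by
      apply slope_core a (lam j + w j) 1 ha0 one_pos
      intro t ht0 _
      have := hper (-t)
      rw [hb0] at this
      simp only [zero_add, abs_neg, abs_zero, sub_zero] at this
      rw [abs_of_pos ht0] at this
      nlinarith
    rw [abs_le]; constructor <;> linarith
  · intro hb0
    rcases lt_or_gt_of_ne hb0 with hneg | hpos
    · -- b j < 0, sign s = -1 : show w j = -(lam j)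
      left
      have h1 : 0 ≤ -(lam j) - w j := by
        apply slope_core a (-(lam j) - w j) (-(b j)) ha0 (by linarith)
        intro t ht0 htr
        have := hper t
        have habs : |b j + t| - |b j| = -t := by
          rw [abs_of_neg hneg, abs_of_neg (by linarith : b j + t < 0)]; ring
        rw [habs] at this
        nlinarith
      have h2 : 0 ≤ w j + lam j := by
        apply slope_core a (w j + lam j) (-(b j)) ha0 (by linarith)
        intro t ht0 htr
        have := hper (-t)
        have habs : |b j + -t| - |b j| = t := by
          rw [abs_of_neg hneg, abs_of_neg (by linarith : b j + -t < 0)]; ring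
        rw [habs] at this
        nlinarith
      linarith
    · -- b j > 0 : show w j = lam j
      right
      have h1 : 0 ≤ lam j - w j := by
        apply slope_core a (lam j - w j) (b j) ha0 hpos
        intro t ht0 htr
        have := hper t
        have habs : |b j + t| - |b j| = t := by
          rw [abs_of_pos hpos, abs_of_pos (by linarith : 0 < b j + t)]; ring
        rw [habs] at this
        nlinarith
      have h2 : 0 ≤ w j - lam j := by
        apply slope_core a (w j - lam j) (b j) ha0 hpos
        intro t ht0 htr
        have := hper (-t)
        have habs : |b j + -t| - |b j| = -t := by
          rw [abs_of_pos hpos, abs_of_pos (by linarith : 0 < b j + -t)]; ring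
        rw [habs] at this
        nlinarith
      linarith

/-- KKT sufficiency. -/
lemma kkt_sufficient {n p : ℕ} (X : Matrix (Fin n) (Fin p) ℝ) (y : Fin n → ℝ)
    (lam : Fin p → ℝ) (b : Fin p → ℝ)
    (h1 : ∀ j, |Xᵀ.mulVec (y - X.mulVec b) j| ≤ lam j)
    (h2 : ∀ j, Xᵀ.mulVec (y - X.mulVec b) j * b j = lam j * |b j|) :
    ∀ b', lassoL X y lam b ≤ lassoL X y lam b' := by
  intro b'
  rw [lasso_expand X y lam b b']
  set w := Xᵀ.mulVec (y - X.mulVec b) with hw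
  have hA : 0 ≤ ∑ i, (X.mulVec (b' - b) i) ^ 2 := Finset.sum_nonneg fun i _ => sq_nonneg _
  have hB : 0 ≤ ∑ j, (lam j * |b' j| - w j * b' j) := by
    apply Finset.sum_nonneg
    intro j _
    have : w j * b' j ≤ |w j| * |b' j| := by
      calc w j * b' j ≤ |w j * b' j| := le_abs_self _
        _ = |w j| * |b' j| := abs_mul _ _
    have h3 : |w j| * |b' j| ≤ lam j * |b' j| :=
      mul_le_mul_of_nonneg_right (h1 j) (abs_nonneg _)
    linarith
  have hC : ∑ j, (lam j * |b j| - w j * b j) = 0 := by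
    apply Finset.sum_eq_zero
    intro j _
    rw [h2 j]; ring
  linarith

/-- (i) some observation `y` admits a Lasso solution selecting
exactly the model `M` iff `col(X') ∩ 𝓑_M ≠ ∅`; (ii) `𝓑_{M̃} ⊆ 𝓑_M` for
`M ⊆ M̃`. -/
theorem lasso_selectable_models
    {n p : ℕ} (X : Matrix (Fin n) (Fin p) ℝ)
    (lam : Fin p → ℝ) (hlam : ∀ j, 0 ≤ lam j) :
    (∀ M : Finset (Fin p),
      (∃ (y : Fin n → ℝ) (b : Fin p → ℝ),
          (∀ b' : Fin p → ℝ, lassoL X y lam b ≤ lassoL X y lam b')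
          ∧ (∀ j, b j ≠ 0 ↔ j ∈ M))
      ↔ ({w : Fin p → ℝ | ∃ c : Fin n → ℝ, Xᵀ.mulVec c = w}
          ∩ boxFace lam M).Nonempty)
    ∧ (∀ M M' : Finset (Fin p), M ⊆ M' → boxFace lam M' ⊆ boxFace lam M) := by
  constructor
  · intro M
    constructor
    · rintro ⟨y, b, hmin, hsupp⟩
      refine ⟨Xᵀ.mulVec (y - X.mulVec b), ⟨y - X.mulVec b, rfl⟩, ?_⟩
      intro j
      by_cases hj : j ∈ M
      · simp only [hj, if_true]
        exact (kkt_coord X y lam hlam b hmin j).2 ((hsupp j).mpr hj)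
      · simp only [hj, if_false]
        have hb0 : b j = 0 := by
          by_contra hb; exact hj ((hsupp j).mp hb)
        have := (kkt_coord X y lam hlam b hmin j).1 hb0
        rw [abs_le] at this
        exact ⟨this.1, this.2⟩
    · rintro ⟨w, ⟨c, hc⟩, hbox⟩
      classical
      set b : Fin p → ℝ := fun j => if j ∈ M then (if w j = lam j then 1 else -1) else 0
        with hb
      refine ⟨X.mulVec b + c, b, ?_, ?_⟩
      · have hyc : (X.mulVec b + c) - X.mulVec b = c := by abel
        apply kkt_sufficient
        · intro j
          rw [hyc, hc]
          by_cases hj : j ∈ M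
          · have := hbox j
            rw [if_pos hj] at this
            rcases this with h | h <;> rw [h, abs_le] <;>
              constructor <;> linarith [hlam j]
          · have := hbox j
            rw [if_neg hj] at this
            rw [abs_le]; exact ⟨this.1, this.2⟩
        · intro j
          rw [hyc, hc]
          by_cases hj : j ∈ M
          · have hbj := hbox j
            rw [if_pos hj] at hbj
            by_cases hwl : w j = lam j
            · have : b j = 1 := by rw [hb]; simp [hj, hwl]
              rw [this, hwl]; simp
            · have hwneg : w j = -(lam j) := by tauto
              have : b j = -1 := by rw [hb]; simp [hj, hwl]
              rw [this, hwneg]; simp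
          · have : b j = 0 := by rw [hb]; simp [hj]
            rw [this]; simp
      · intro j
        by_cases hj : j ∈ M
        · constructor
          · intro _; exact hj
          · intro _
            rw [hb]; simp only [hj, if_true]
            by_cases hwl : w j = lam j <;> simp [hwl]
        · constructor
          · intro hbj
            exfalso; apply hbj
            rw [hb]; simp [hj]
          · intro h; exact absurd h hj
  · intro M M' hMM' v hv j
    have hvj := hv j
    by_cases hj : j ∈ M
    · rw [if_pos hj]
      rw [if_pos (hMM' hj)] at hvj
      exact hvj
    · rw [if_neg hj]
      by_cases hj' : j ∈ M'
      · rw [if_pos hj'] at hvj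
        rcases hvj with h | h <;> rw [h] <;>
          exact ⟨by linarith [hlam j], by linarith [hlam j]⟩
      · rw [if_neg hj'] at hvj
        exact hvj

end
end

section
/- Let X ∈ ℝ^{n×p} be arbitrary and λ_1,…,λ_p ≥ 0. Define the structural set 𝓜(X,λ) as the set of all j ∈ {1,…,p} such that there exists y ∈ ℝ^n and a global minimizer b of L(·; y) with b_j ≠ 0. Then 𝓜(X,λ) = {j ∈ {1,…,p} : 𝓑_{{j}} ∩ col(X') ≠ ∅}, where 𝓑_{{j}} = ∏_{k=1}^p C_k with C_j = {−λ_j, λ_j} and C_k = [−λ_k, λ_k] for k ≠ j. -/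
open MeasureTheory Matrix BigOperators

noncomputable section

private lemma dot_swap {n p : ℕ} (X : Matrix (Fin n) (Fin p) ℝ) (u : Fin n → ℝ)
    (v : Fin p → ℝ) :
    ∑ i, u i * X.mulVec v i = ∑ k, Xᵀ.mulVec u k * v k := by
  simp only [Matrix.mulVec, dotProduct, Matrix.transpose_apply, Finset.mul_sum,
    Finset.sum_mul]
  rw [Finset.sum_comm]
  exact Finset.sum_congr rfl fun k _ => Finset.sum_congr rfl fun i _ => by ring

private lemma lassoL_expand {n p : ℕ} (X : Matrix (Fin n) (Fin p) ℝ) (y : Fin n → ℝ)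
    (lam : Fin p → ℝ) (b d : Fin p → ℝ) :
    lassoL X y lam (fun k => b k + d k) = lassoL X y lam b
      + (∑ i, (X.mulVec d i) ^ 2
        + ∑ k, (2 * lam k * (|b k + d k| - |b k|)
            - 2 * Xᵀ.mulVec (fun i => y i - X.mulVec b i) k * d k)) := by
  have hmv : ∀ i, X.mulVec (fun k => b k + d k) i = X.mulVec b i + X.mulVec d i := by
    intro i
    simp [Matrix.mulVec, dotProduct, mul_add, Finset.sum_add_distrib]
  have hdot := dot_swap X (fun i => y i - X.mulVec b i) d
  unfold lassoL
  simp only [hmv]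
  have h1 : ∑ i, (y i - (X.mulVec b i + X.mulVec d i)) ^ 2
      = ∑ i, (y i - X.mulVec b i) ^ 2 - 2 * ∑ i, (y i - X.mulVec b i) * X.mulVec d i
        + ∑ i, (X.mulVec d i) ^ 2 := by
    rw [Finset.mul_sum, ← Finset.sum_sub_distrib, ← Finset.sum_add_distrib]
    exact Finset.sum_congr rfl fun i _ => by ring
  have h2 : ∑ k, (2 * lam k * (|b k + d k| - |b k|)
      - 2 * Xᵀ.mulVec (fun i => y i - X.mulVec b i) k * d k)
      = 2 * ∑ k, lam k * |b k + d k| - 2 * ∑ k, lam k * |b k|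
        - 2 * ∑ k, Xᵀ.mulVec (fun i => y i - X.mulVec b i) k * d k := by
    rw [Finset.mul_sum, Finset.mul_sum, Finset.mul_sum, ← Finset.sum_sub_distrib,
      ← Finset.sum_sub_distrib]
    exact Finset.sum_congr rfl fun k _ => by ring
  rw [h1, h2, hdot]
  ring

private lemma le_of_small (w l A B : ℝ) (hA : 0 ≤ A) (hB : 0 < B)
    (h : ∀ s : ℝ, 0 < s → s < B → w ≤ s * A / 2 + l) : w ≤ l := by
  by_contra hc
  push_neg at hc
  set s := min (B / 2) ((w - l) / (A + 1)) with hs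
  have hs0 : 0 < s := lt_min (by linarith) (div_pos (by linarith) (by linarith))
  have hsB : s < B := lt_of_le_of_lt (min_le_left _ _) (by linarith)
  have hs1 : s ≤ (w - l) / (A + 1) := min_le_right _ _
  have hs2 : s * (A + 1) ≤ w - l := (le_div_iff₀ (by linarith)).mp hs1
  have h3 := h s hs0 hsB
  nlinarith [mul_nonneg hs0.le hA]

/-- the structural set `𝓜(X,λ)`, i.e. the set of covariates `j`
that are active in some Lasso solution for some observation `y`, equals
`{j : 𝓑_{{j}} ∩ col(X') ≠ ∅}`. -/
theorem lasso_structural_set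
    {n p : ℕ} (X : Matrix (Fin n) (Fin p) ℝ)
    (lam : Fin p → ℝ) (hlam : ∀ j, 0 ≤ lam j) :
    {j : Fin p | ∃ (y : Fin n → ℝ) (b : Fin p → ℝ),
        (∀ b' : Fin p → ℝ, lassoL X y lam b ≤ lassoL X y lam b') ∧ b j ≠ 0}
    = {j : Fin p | (boxFace lam {j}
        ∩ {w : Fin p → ℝ | ∃ c : Fin n → ℝ, Xᵀ.mulVec c = w}).Nonempty} := by
  ext j
  simp only [Set.mem_setOf_eq]
  constructor
  · rintro ⟨y, b, hmin, hbj⟩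
    set w : Fin p → ℝ := Xᵀ.mulVec (fun i => y i - X.mulVec b i) with hwdef
    have hAk : ∀ k : Fin p, (0:ℝ) ≤ ∑ i, (X i k) ^ 2 :=
      fun k => Finset.sum_nonneg fun i _ => sq_nonneg _
    -- perturbation inequality
    have pert : ∀ (k : Fin p) (t : ℝ),
        0 ≤ (∑ i, (X i k) ^ 2) * t ^ 2
          + (2 * lam k * (|b k + t| - |b k|) - 2 * w k * t) := by
      intro k t
      have h := hmin (fun m => b m + (if m = k then t else 0))
      rw [lassoL_expand X y lam b (fun m => if m = k then t else 0)] at h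
      have e1 : ∑ i, (X.mulVec (fun m => if m = k then t else 0) i) ^ 2
          = (∑ i, (X i k) ^ 2) * t ^ 2 := by
        rw [Finset.sum_mul]
        refine Finset.sum_congr rfl fun i _ => ?_
        have hmv : X.mulVec (fun m => if m = k then t else 0) i = X i k * t := by
          simp [Matrix.mulVec, dotProduct, mul_ite]
        rw [hmv]; ring
      have e2 : ∑ m, (2 * lam m * (|b m + (if m = k then t else 0)| - |b m|)
          - 2 * w m * (if m = k then t else 0))
          = 2 * lam k * (|b k + t| - |b k|) - 2 * w k * t := by
        rw [Finset.sum_eq_single k]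
        · simp
        · intro m _ hm; simp [hm]
        · simp
      rw [e1, e2] at h
      linarith
    have claim_ub : ∀ k, w k ≤ lam k := by
      intro k
      apply le_of_small (w k) (lam k) (∑ i, (X i k) ^ 2) 1 (hAk k) one_pos
      intro s hs0 _
      have h := pert k s
      have habs : |b k + s| - |b k| ≤ s := by
        have h1 := abs_add_le (b k) s
        rw [abs_of_pos hs0] at h1
        linarith
      nlinarith [mul_le_mul_of_nonneg_left habs (hlam k)]
    have claim_lb : ∀ k, -(lam k) ≤ w k := by
      intro k
      have : -(w k) ≤ lam k := by
        apply le_of_small (-(w k)) (lam k) (∑ i, (X i k) ^ 2) 1 (hAk k) one_pos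
        intro s hs0 _
        have h := pert k (-s)
        have habs : |b k + -s| - |b k| ≤ s := by
          have h1 := abs_add_le (b k) (-s)
          rw [abs_neg, abs_of_pos hs0] at h1
          linarith
        nlinarith [mul_le_mul_of_nonneg_left habs (hlam k)]
      linarith
    have hjval : w j = -(lam j) ∨ w j = lam j := by
      rcases lt_or_gt_of_ne hbj with hneg | hpos
      · left
        have hub : w j ≤ -(lam j) := by
          apply le_of_small (w j) (-(lam j)) (∑ i, (X i j) ^ 2) (-(b j)) (hAk j)
            (by linarith)
          intro s hs0 hsB
          have h := pert j s
          have e1 : |b j + s| = -(b j + s) := abs_of_neg (by linarith)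
          have e2 : |b j| = -(b j) := abs_of_neg hneg
          rw [e1, e2] at h
          nlinarith
        exact le_antisymm hub (claim_lb j)
      · right
        have hlb : lam j ≤ w j := by
          apply le_of_small (lam j) (w j) (∑ i, (X i j) ^ 2) (b j) (hAk j) hpos
          intro s hs0 hsB
          have h := pert j (-s)
          have e1 : |b j + -s| = b j + -s := abs_of_pos (by linarith)
          have e2 : |b j| = b j := abs_of_pos hpos
          rw [e1, e2] at h
          nlinarith
        exact le_antisymm (claim_ub j) hlb
    refine ⟨w, fun m => ?_, (fun i => y i - X.mulVec b i), hwdef.symm⟩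
    by_cases hm : m ∈ ({j} : Finset (Fin p))
    · rw [if_pos hm]
      rw [Finset.mem_singleton] at hm
      subst hm
      exact hjval
    · rw [if_neg hm]
      exact ⟨claim_lb m, claim_ub m⟩
  · rintro ⟨w, hbox, c, hc⟩
    have hj := hbox j
    rw [if_pos (Finset.mem_singleton_self j)] at hj
    obtain ⟨ε, hε1, hεw⟩ : ∃ ε : ℝ, (ε = 1 ∨ ε = -1) ∧ w j = ε * lam j := by
      rcases hj with h | h
      · exact ⟨-1, Or.inr rfl, by rw [h]; ring⟩
      · exact ⟨1, Or.inl rfl, by rw [h]; ring⟩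
    have hwabs : ∀ k, |w k| ≤ lam k := by
      intro k
      by_cases hk : k = j
      · subst hk
        rw [hεw]
        rcases hε1 with h | h <;> rw [h]
        · rw [one_mul, abs_of_nonneg (hlam k)]
        · rw [neg_one_mul, abs_neg, abs_of_nonneg (hlam k)]
      · have hb := hbox k
        rw [if_neg (by simpa using hk)] at hb
        exact abs_le.mpr ⟨hb.1, hb.2⟩
    set b : Fin p → ℝ := fun m => if m = j then ε else 0 with hbdef
    set y : Fin n → ℝ := fun i => X.mulVec b i + c i with hydef
    have hyb : (fun i => y i - X.mulVec b i) = c := by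
      funext i; rw [hydef]; ring
    refine ⟨y, b, ?_, ?_⟩
    · intro b'
      have hb' : b' = fun k => b k + (b' k - b k) := funext fun k => by ring
      conv_rhs => rw [hb']
      rw [lassoL_expand X y lam b (fun k => b' k - b k)]
      have hS1 : 0 ≤ ∑ i, (X.mulVec (fun k => b' k - b k) i) ^ 2 :=
        Finset.sum_nonneg fun i _ => sq_nonneg _
      have hS2 : 0 ≤ ∑ k, (2 * lam k * (|b k + (b' k - b k)| - |b k|)
          - 2 * Xᵀ.mulVec (fun i => y i - X.mulVec b i) k * (b' k - b k)) := by
        rw [hyb, hc]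
        refine Finset.sum_nonneg fun k _ => ?_
        have hkey : w k * b k = lam k * |b k| := by
          by_cases hk : k = j
          · subst hk
            have hbk : b k = ε := if_pos rfl
            rw [hbk, hεw]
            rcases hε1 with h | h <;> rw [h] <;> norm_num
          · have hbk : b k = 0 := if_neg hk
            rw [hbk]; simp
        have h1 : w k * b' k ≤ lam k * |b' k| := by
          calc w k * b' k ≤ |w k * b' k| := le_abs_self _
            _ = |w k| * |b' k| := abs_mul _ _
            _ ≤ lam k * |b' k| := mul_le_mul_of_nonneg_right (hwabs k) (abs_nonneg _)
        have hsimp : b k + (b' k - b k) = b' k := by ring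
        rw [hsimp]
        linarith
      linarith
    · have hbj : b j = ε := if_pos rfl
      rw [hbj]
      rcases hε1 with h | h <;> rw [h] <;> norm_num

end
end

section
/- Let X ∈ ℝ^{n×p} be arbitrary and λ_1,…,λ_p ≥ 0. The Lasso solution is unique for every y ∈ ℝ^n (i.e., for each y the objective L(·; y) has exactly one global minimizer) if and only if col(X') ∩ 𝓑_M = ∅ for every M ⊆ {1,…,p} with |M| > rk(X), where 𝓑_M = ∏_{j=1}^p C_j with C_j = {−λ_j, λ_j} for j ∈ M and C_j = [−λ_j, λ_j] for j ∉ M. -/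
open MeasureTheory Matrix BigOperators

noncomputable section

namespace LassoAux

variable {n p : ℕ}

lemma swap (X : Matrix (Fin n) (Fin p) ℝ) (r : Fin n → ℝ) (d : Fin p → ℝ) :
    ∑ i, r i * X.mulVec d i = ∑ j, Xᵀ.mulVec r j * d j := by
  simp only [Matrix.mulVec, dotProduct, Finset.mul_sum, Finset.sum_mul,
    Matrix.transpose_apply]
  rw [Finset.sum_comm]
  apply Finset.sum_congr rfl; intro j _
  apply Finset.sum_congr rfl; intro i _
  ring

lemma lasso_identity (X : Matrix (Fin n) (Fin p) ℝ) (y : Fin n → ℝ) (lam : Fin p → ℝ)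
    (b b' : Fin p → ℝ) :
    lassoL X y lam b' = lassoL X y lam b
      + (∑ i, (X.mulVec (b' - b) i) ^ 2)
      + 2 * ∑ j, ((lam j * |b' j| - Xᵀ.mulVec (y - X.mulVec b) j * b' j)
          - (lam j * |b j| - Xᵀ.mulVec (y - X.mulVec b) j * b j)) := by
  set w := Xᵀ.mulVec (y - X.mulVec b) with hw
  have hd : X.mulVec (b' - b) = X.mulVec b' - X.mulVec b := by
    rw [Matrix.mulVec_sub]
  have hsq : ∀ i, (y i - X.mulVec b' i) ^ 2 =
      (y i - X.mulVec b i) ^ 2 + (X.mulVec (b' - b) i) ^ 2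
        - 2 * ((y i - X.mulVec b i) * (X.mulVec (b' - b) i)) := by
    intro i; rw [hd]; simp only [Pi.sub_apply]; ring
  have hswap : ∑ i, (y i - X.mulVec b i) * (X.mulVec (b' - b) i)
      = ∑ j, w j * (b' j - b j) := by
    have := swap X (y - X.mulVec b) (b' - b)
    simpa [hw, Pi.sub_apply] using this
  simp only [lassoL]
  rw [Finset.sum_congr rfl (fun i _ => hsq i)]
  rw [Finset.sum_sub_distrib, Finset.sum_add_distrib, ← Finset.mul_sum, hswap]
  rw [Finset.sum_sub_distrib]
  simp only [sub_mul, mul_sub]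
  rw [Finset.sum_sub_distrib, Finset.sum_sub_distrib, Finset.sum_sub_distrib]
  ring


/-- KKT sufficiency -/
lemma kkt_suff (X : Matrix (Fin n) (Fin p) ℝ) (y : Fin n → ℝ) (lam : Fin p → ℝ)
    (b : Fin p → ℝ)
    (hle : ∀ j, |Xᵀ.mulVec (y - X.mulVec b) j| ≤ lam j)
    (heq : ∀ j, Xᵀ.mulVec (y - X.mulVec b) j * b j = lam j * |b j|) :
    ∀ b', lassoL X y lam b ≤ lassoL X y lam b' := by
  intro b'
  rw [lasso_identity X y lam b b']
  have h1 : 0 ≤ ∑ i, (X.mulVec (b' - b) i) ^ 2 :=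
    Finset.sum_nonneg fun i _ => sq_nonneg _
  have h2 : 0 ≤ ∑ j, ((lam j * |b' j| - Xᵀ.mulVec (y - X.mulVec b) j * b' j)
      - (lam j * |b j| - Xᵀ.mulVec (y - X.mulVec b) j * b j)) := by
    apply Finset.sum_nonneg
    intro j _
    rw [heq j, sub_self, sub_zero, sub_nonneg]
    calc Xᵀ.mulVec (y - X.mulVec b) j * b' j
        ≤ |Xᵀ.mulVec (y - X.mulVec b) j * b' j| := le_abs_self _
      _ = |Xᵀ.mulVec (y - X.mulVec b) j| * |b' j| := abs_mul _ _
      _ ≤ lam j * |b' j| := mul_le_mul_of_nonneg_right (hle j) (abs_nonneg _)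
  linarith

lemma aux_le {a c : ℝ} (hc : 0 ≤ c) (h : ∀ t : ℝ, 0 < t → a ≤ t * c) : a ≤ 0 := by
  rcases eq_or_lt_of_le hc with hc0 | hcpos
  · have := h 1 one_pos; simpa [← hc0] using this
  · by_contra ha
    push_neg at ha
    have := h (a / (2 * c)) (by positivity)
    have h2 : a / (2 * c) * c = a / 2 := by field_simp
    rw [h2] at this; linarith

lemma aux_le2 {a c δ : ℝ} (hc : 0 ≤ c) (hδ : 0 < δ)
    (h : ∀ t : ℝ, 0 < t → t < δ → a ≤ t * c) : a ≤ 0 := by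
  apply aux_le hc
  intro t ht
  rcases lt_or_ge t δ with h1 | h1
  · exact h t ht h1
  · have := h (δ/2) (by positivity) (by linarith)
    calc a ≤ δ/2 * c := this
      _ ≤ t * c := by apply mul_le_mul_of_nonneg_right (by linarith) hc

/-- single-coordinate perturbation inequality -/
lemma perturb (X : Matrix (Fin n) (Fin p) ℝ) (y : Fin n → ℝ) (lam : Fin p → ℝ)
    (b : Fin p → ℝ)
    (hmin : ∀ b', lassoL X y lam b ≤ lassoL X y lam b') (j : Fin p) (t : ℝ) :
    0 ≤ t ^ 2 * (∑ i, (X i j) ^ 2)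
      + 2 * (lam j * (|b j + t| - |b j|) - Xᵀ.mulVec (y - X.mulVec b) j * t) := by
  set w := Xᵀ.mulVec (y - X.mulVec b) with hw
  have key := lasso_identity X y lam b (Function.update b j (b j + t))
  have hmin' := hmin (Function.update b j (b j + t))
  have hdiff : Function.update b j (b j + t) - b = Pi.single j t := by
    funext k
    by_cases hk : k = j
    · subst hk; simp
    · simp [Function.update_of_ne hk, Pi.single_eq_of_ne hk]
  rw [hdiff] at key
  have hsq : ∑ i, (X.mulVec (Pi.single j t) i) ^ 2 = t ^ 2 * ∑ i, (X i j) ^ 2 := by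
    rw [Matrix.mulVec_single, Finset.mul_sum]
    apply Finset.sum_congr rfl; intro i _; rw [Pi.smul_apply, Matrix.col_apply, op_smul_eq_mul]; ring
  rw [hsq] at key
  have hpen : ∑ k, ((lam k * |Function.update b j (b j + t) k| - w k * Function.update b j (b j + t) k)
      - (lam k * |b k| - w k * b k))
      = lam j * (|b j + t| - |b j|) - w j * t := by
    rw [Finset.sum_eq_single j]
    · simp only [Function.update_self]; ring
    · intro k _ hk
      simp only [Function.update_of_ne hk]; ring
    · intro h; exact absurd (Finset.mem_univ j) h
  rw [hpen] at key
  rw [key] at hmin'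
  linarith

/-- KKT necessity -/
lemma kkt_nec (X : Matrix (Fin n) (Fin p) ℝ) (y : Fin n → ℝ) (lam : Fin p → ℝ)
    (hlam : ∀ j, 0 ≤ lam j) (b : Fin p → ℝ)
    (hmin : ∀ b', lassoL X y lam b ≤ lassoL X y lam b') :
    (∀ j, |Xᵀ.mulVec (y - X.mulVec b) j| ≤ lam j) ∧
    (∀ j, Xᵀ.mulVec (y - X.mulVec b) j * b j = lam j * |b j|) := by
  set w := Xᵀ.mulVec (y - X.mulVec b) with hw
  set C := fun j => ∑ i, (X i j) ^ 2 with hC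
  have hCpos : ∀ j, 0 ≤ C j := fun j => Finset.sum_nonneg fun i _ => sq_nonneg _
  have hperturb : ∀ j t, 0 ≤ t ^ 2 * C j + 2 * (lam j * (|b j + t| - |b j|) - w j * t) :=
    fun j t => perturb X y lam b hmin j t
  have hle : ∀ j, |w j| ≤ lam j := by
    intro j
    rw [abs_le]
    constructor
    · rw [neg_le, ← sub_nonpos]
      apply aux_le (by positivity : (0:ℝ) ≤ C j / 2)
      intro t ht
      have := hperturb j (-t)
      have habs : |b j + -t| - |b j| ≤ t := by
        have := abs_sub_abs_le_abs_sub (b j + -t) (b j)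
        have h2 : |b j + -t - b j| = t := by
          rw [show b j + -t - b j = -t by ring, abs_neg, abs_of_pos ht]
        linarith
      have hlamj := hlam j
      nlinarith [mul_le_mul_of_nonneg_left habs hlamj]
    · rw [← sub_nonpos]
      apply aux_le (by positivity : (0:ℝ) ≤ C j / 2)
      intro t ht
      have := hperturb j t
      have habs : |b j + t| - |b j| ≤ t := by
        have := abs_sub_abs_le_abs_sub (b j + t) (b j)
        have h2 : |b j + t - b j| = t := by
          rw [show b j + t - b j = t by ring, abs_of_pos ht]
        linarith
      have hlamj := hlam j
      nlinarith [mul_le_mul_of_nonneg_left habs hlamj]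
  refine ⟨hle, ?_⟩
  intro j
  rcases lt_trichotomy (b j) 0 with hb | hb | hb
  · -- b j < 0 : show w j = - lam j
    have : w j ≤ -lam j := by
      rw [← sub_nonpos]
      apply aux_le2 (by positivity : (0:ℝ) ≤ C j / 2) (show (0:ℝ) < -(b j) by linarith)
      intro t ht htd
      have := hperturb j t
      have habs : |b j + t| - |b j| = -t := by
        rw [abs_of_neg (by linarith : b j + t < 0), abs_of_neg hb]; ring
      rw [habs] at this
      nlinarith
    have h2 : -lam j ≤ w j := (abs_le.mp (hle j)).1
    have : w j = -lam j := le_antisymm this h2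
    rw [this, abs_of_neg hb]; ring
  · simp [hb]
  · -- b j > 0 : show w j = lam j
    have : lam j ≤ w j := by
      rw [← sub_nonpos]
      apply aux_le2 (by positivity : (0:ℝ) ≤ C j / 2) hb
      intro t ht htd
      have := hperturb j (-t)
      have habs : |b j + -t| - |b j| = -t := by
        rw [abs_of_pos (by linarith : 0 < b j + -t), abs_of_pos hb]; ring
      rw [habs] at this
      nlinarith
    have h2 : w j ≤ lam j := (abs_le.mp (hle j)).2
    have : w j = lam j := le_antisymm h2 this
    rw [this, abs_of_pos hb]

/-- two minimizers: same fit and the second satisfies equality w.r.t. the first's w -/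
lemma two_mins (X : Matrix (Fin n) (Fin p) ℝ) (y : Fin n → ℝ) (lam : Fin p → ℝ)
    (hlam : ∀ j, 0 ≤ lam j) (b1 b2 : Fin p → ℝ)
    (h1 : ∀ b', lassoL X y lam b1 ≤ lassoL X y lam b')
    (h2 : ∀ b', lassoL X y lam b2 ≤ lassoL X y lam b') :
    X.mulVec b1 = X.mulVec b2 ∧
    (∀ j, Xᵀ.mulVec (y - X.mulVec b1) j * b2 j = lam j * |b2 j|) := by
  set w := Xᵀ.mulVec (y - X.mulVec b1) with hw
  obtain ⟨hle, heq⟩ := kkt_nec X y lam hlam b1 h1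
  have key := lasso_identity X y lam b1 b2
  have hval : lassoL X y lam b2 = lassoL X y lam b1 := le_antisymm (h2 b1) (h1 b2)
  rw [hval] at key
  have hterm : ∀ j, (0:ℝ) ≤ (lam j * |b2 j| - w j * b2 j) - (lam j * |b1 j| - w j * b1 j) := by
    intro j
    rw [heq j, sub_self, sub_zero, sub_nonneg]
    calc w j * b2 j ≤ |w j * b2 j| := le_abs_self _
      _ = |w j| * |b2 j| := abs_mul _ _
      _ ≤ lam j * |b2 j| := mul_le_mul_of_nonneg_right (hle j) (abs_nonneg _)
  have hsum2 : 0 ≤ ∑ j, ((lam j * |b2 j| - w j * b2 j) - (lam j * |b1 j| - w j * b1 j)) :=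
    Finset.sum_nonneg fun j _ => hterm j
  have hsq : 0 ≤ ∑ i, (X.mulVec (b2 - b1) i) ^ 2 :=
    Finset.sum_nonneg fun i _ => sq_nonneg _
  have hsq0 : ∑ i, (X.mulVec (b2 - b1) i) ^ 2 = 0 := by linarith
  have hsump0 : ∑ j, ((lam j * |b2 j| - w j * b2 j) - (lam j * |b1 j| - w j * b1 j)) = 0 := by
    linarith
  constructor
  · have := (Finset.sum_eq_zero_iff_of_nonneg (fun i _ => sq_nonneg (X.mulVec (b2 - b1) i))).mp hsq0
    funext i
    have hi := this i (Finset.mem_univ i)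
    have : X.mulVec (b2 - b1) i = 0 := by
      exact pow_eq_zero_iff (by norm_num) |>.mp hi
    rw [Matrix.mulVec_sub] at this
    simp only [Pi.sub_apply] at this
    linarith
  · intro j
    have := (Finset.sum_eq_zero_iff_of_nonneg (fun j _ => hterm j)).mp hsump0 j (Finset.mem_univ j)
    have hj := heq j
    linarith


/-- extension by zero, as a linear map -/
def extZero (M : Finset (Fin p)) : (M → ℝ) →ₗ[ℝ] (Fin p → ℝ) where
  toFun g := fun j => if h : j ∈ M then g ⟨j, h⟩ else 0
  map_add' g1 g2 := by funext j; by_cases h : j ∈ M <;> simp [h]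
  map_smul' c g := by funext j; by_cases h : j ∈ M <;> simp [h]

/-- if rank X < |M| there is a nonzero kernel vector supported in M -/
lemma exists_ker_supported (X : Matrix (Fin n) (Fin p) ℝ) (M : Finset (Fin p))
    (h : X.rank < M.card) :
    ∃ d : Fin p → ℝ, d ≠ 0 ∧ X.mulVec d = 0 ∧ ∀ j ∉ M, d j = 0 := by
  set ψ : (M → ℝ) →ₗ[ℝ] (Fin n → ℝ) := X.mulVecLin.comp (extZero M) with hψ
  by_cases hker : LinearMap.ker ψ = ⊥
  · exfalso
    have hinj : Function.Injective ψ := LinearMap.ker_eq_bot.mp hker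
    have h1 : Module.finrank ℝ (M → ℝ) = Module.finrank ℝ (LinearMap.range ψ) :=
      (LinearMap.finrank_range_of_inj hinj).symm
    have h2 : LinearMap.range ψ ≤ LinearMap.range X.mulVecLin := by
      rintro v ⟨g, rfl⟩
      exact ⟨extZero M g, rfl⟩
    have h3 : Module.finrank ℝ (LinearMap.range ψ)
        ≤ Module.finrank ℝ (LinearMap.range X.mulVecLin) :=
      Submodule.finrank_mono h2
    have h4 : Module.finrank ℝ (M → ℝ) = M.card := by
      rw [Module.finrank_pi]; exact Fintype.card_coe M
    rw [h4] at h1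
    have : M.card ≤ X.rank := by
      rw [Matrix.rank]; omega
    omega
  · obtain ⟨g, hgmem, hg0⟩ := Submodule.exists_mem_ne_zero_of_ne_bot hker
    refine ⟨extZero M g, ?_, ?_, ?_⟩
    · intro h0
      apply hg0
      funext j
      have := congrFun h0 j.val
      simpa [extZero, j.prop] using this
    · have := LinearMap.mem_ker.mp hgmem
      simpa [hψ] using this
    · intro j hj; simp [extZero, hj]

/-- terminal case: restriction of row space to M injective + kernel vector supported in M
    forces rank X < |M| -/
lemma rank_lt_card (X : Matrix (Fin n) (Fin p) ℝ) (M : Finset (Fin p))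
    (hinj : ∀ w : Fin p → ℝ, (∃ c, Xᵀ.mulVec c = w) → (∀ j ∈ M, w j = 0) → w = 0)
    (d : Fin p → ℝ) (hd0 : d ≠ 0) (hXd : X.mulVec d = 0) (hsupp : ∀ j ∉ M, d j = 0) :
    X.rank < M.card := by
  classical
  set L1 := LinearMap.range Xᵀ.mulVecLin with hL1
  set proj : (Fin p → ℝ) →ₗ[ℝ] (M → ℝ) := LinearMap.funLeft ℝ ℝ (Subtype.val) with hproj
  set f : L1 →ₗ[ℝ] (M → ℝ) := proj.comp L1.subtype with hf
  have hfinj : Function.Injective f := by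
    rw [← LinearMap.ker_eq_bot]
    rw [Submodule.eq_bot_iff]
    rintro ⟨w, hw⟩ hker
    apply Subtype.ext
    obtain ⟨c, hc⟩ := hw
    apply hinj w ⟨c, hc⟩
    intro j hj
    have := congrFun (show f ⟨w, ⟨c, hc⟩⟩ = 0 from hker) ⟨j, hj⟩
    simpa [hf, hproj, LinearMap.funLeft] using this
  -- linear functional given by d
  set g : (M → ℝ) →ₗ[ℝ] ℝ :=
    { toFun := fun v => ∑ j : M, d j.val * v j
      map_add' := by intro v1 v2; simp only [Pi.add_apply, mul_add, Finset.sum_add_distrib]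
      map_smul' := by intro c v; simp [Finset.mul_sum]; apply Finset.sum_congr rfl; intros; ring } with hg
  have hrange : LinearMap.range f ≤ LinearMap.ker g := by
    rintro v ⟨⟨w, hw⟩, rfl⟩
    obtain ⟨c, hc⟩ := hw
    simp only [LinearMap.mem_ker, hg, hf, hproj, LinearMap.coe_mk, AddHom.coe_mk,
      LinearMap.comp_apply, Submodule.coe_subtype, LinearMap.funLeft_apply]
    have hsum : ∑ j : M, d j.val * w j.val = ∑ j : Fin p, d j * w j := by
      rw [Finset.sum_coe_sort M (fun j => d j * w j)]
      apply Finset.sum_subset (Finset.subset_univ M)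
      intro j _ hj
      rw [hsupp j hj, zero_mul]
    rw [hsum, ← hc]
    have hsw := swap Xᵀ d c
    rw [transpose_transpose] at hsw
    simp only [Matrix.mulVecLin_apply]
    rw [hsw]
    have : ∀ i, X.mulVec d i * c i = 0 := by
      intro i; rw [congrFun hXd i]; simp
    exact Finset.sum_eq_zero fun i _ => this i
  have hgne : LinearMap.ker g ≠ ⊤ := by
    obtain ⟨j0, hj0⟩ : ∃ j0, d j0 ≠ 0 := by
      by_contra hall; push_neg at hall; exact hd0 (funext hall)
    have hj0M : j0 ∈ M := by
      by_contra hj; exact hj0 (hsupp j0 hj)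
    intro htop
    have : g (Pi.single ⟨j0, hj0M⟩ 1) = 0 := by
      rw [← LinearMap.mem_ker, htop]; trivial
    rw [hg] at this
    simp only [LinearMap.coe_mk, AddHom.coe_mk] at this
    rw [Finset.sum_eq_single (⟨j0, hj0M⟩ : M)] at this
    · simp at this; exact hj0 this
    · intro k _ hk; rw [Pi.single_eq_of_ne hk, mul_zero]
    · intro h; exact absurd (Finset.mem_univ _) h
  have hlt : Module.finrank ℝ (LinearMap.ker g) < M.card := by
    have := Submodule.finrank_lt (s := LinearMap.ker g) hgne
    rwa [Module.finrank_pi, Fintype.card_coe] at this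
  have heq1 : X.rank = Module.finrank ℝ L1 := by
    rw [← Matrix.rank_transpose X]; rfl
  have heq2 : Module.finrank ℝ L1 = Module.finrank ℝ (LinearMap.range f) :=
    (LinearMap.finrank_range_of_inj hfinj).symm
  have hle : Module.finrank ℝ (LinearMap.range f) ≤ Module.finrank ℝ (LinearMap.ker g) :=
    Submodule.finrank_mono hrange
  omega


lemma aug (X : Matrix (Fin n) (Fin p) ℝ) (lam : Fin p → ℝ) (hlam : ∀ j, 0 ≤ lam j) :
    ∀ (k : ℕ) (M : Finset (Fin p)) (w : Fin p → ℝ),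
    p ≤ M.card + k →
    (∃ c, Xᵀ.mulVec c = w) →
    (∀ j, |w j| ≤ lam j) →
    (∀ j ∈ M, |w j| = lam j) →
    (∃ d : Fin p → ℝ, d ≠ 0 ∧ X.mulVec d = 0 ∧ ∀ j ∉ M, d j = 0) →
    ∃ (M' : Finset (Fin p)) (w' : Fin p → ℝ), X.rank < M'.card ∧
      (∃ c, Xᵀ.mulVec c = w') ∧ w' ∈ boxFace lam M' := by
  intro k
  induction k with
  | zero =>
    intro M w hcard hrow hwle hweq hd
    -- M = univ, so the injectivity hypothesis below holds trivially
    have hMuniv : M = Finset.univ := by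
      apply Finset.eq_univ_of_card
      have := Finset.card_le_univ M
      simp only [Finset.card_univ, Fintype.card_fin] at *
      omega
    obtain ⟨d, hd0, hXd, hsupp⟩ := hd
    refine ⟨M, w, ?_, hrow, ?_⟩
    · apply rank_lt_card X M _ d hd0 hXd hsupp
      intro u _ hu
      funext j
      exact hu j (hMuniv ▸ Finset.mem_univ j)
    · intro j
      by_cases hj : j ∈ M
      · simp only [hj, if_true]
        rcases (abs_eq (hlam j)).mp (hweq j hj) with h | h
        · right; exact h
        · left; exact h
      · simp only [hj, if_false]
        exact abs_le.mp (hwle j)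
  | succ k ih =>
    intro M w hcard hrow hwle hweq hd
    by_cases hterm : ∀ u : Fin p → ℝ, (∃ c, Xᵀ.mulVec c = u) → (∀ j ∈ M, u j = 0) → u = 0
    · obtain ⟨d, hd0, hXd, hsupp⟩ := hd
      refine ⟨M, w, rank_lt_card X M hterm d hd0 hXd hsupp, hrow, ?_⟩
      intro j
      by_cases hj : j ∈ M
      · simp only [hj, if_true]
        rcases (abs_eq (hlam j)).mp (hweq j hj) with h | h
        · right; exact h
        · left; exact h
      · simp only [hj, if_false]
        exact abs_le.mp (hwle j)
    · push_neg at hterm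
      obtain ⟨u, hurow, huM, hu0⟩ := hterm
      obtain ⟨j1, hj1⟩ : ∃ j1, u j1 ≠ 0 := by
        by_contra hall; push_neg at hall; exact hu0 (funext hall)
      set T : Set ℝ := {t | 0 ≤ t ∧ ∀ j, |w j + t * u j| ≤ lam j} with hT
      have hT0 : (0:ℝ) ∈ T := ⟨le_refl 0, by simpa using hwle⟩
      have hTbdd : BddAbove T := by
        refine ⟨(lam j1 + |w j1|) / |u j1|, ?_⟩
        rintro t ⟨ht0, ht⟩
        rw [le_div_iff₀ (abs_pos.mpr hj1)]
        have h1 := ht j1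
        have h2 : |t * u j1| ≤ |w j1 + t * u j1| + |w j1| := by
          have := abs_add_le (w j1 + t * u j1) (-(w j1))
          simp only [abs_neg] at this
          calc |t * u j1| = |w j1 + t * u j1 + -(w j1)| := by ring_nf
            _ ≤ |w j1 + t * u j1| + |w j1| := this
        rw [abs_mul, abs_of_nonneg ht0] at h2
        linarith
      have hTclosed : IsClosed T := by
        have : T = Set.Ici 0 ∩ ⋂ j, {t : ℝ | |w j + t * u j| ≤ lam j} := by
          ext t; simp [hT, Set.mem_iInter, Set.mem_Ici]
        rw [this]
        apply isClosed_Ici.inter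
        apply isClosed_iInter
        intro j
        apply isClosed_le _ continuous_const
        exact (continuous_const.add (continuous_mul_right _)).abs
      set t0 := sSup T with ht0def
      have ht0T : t0 ∈ T := hTclosed.csSup_mem ⟨0, hT0⟩ hTbdd
      set w' := fun j => w j + t0 * u j with hw'
      have hw'M : ∀ j ∈ M, w' j = w j := by
        intro j hj; simp [hw', huM j hj]
      have hw'le : ∀ j, |w' j| ≤ lam j := ht0T.2
      -- find new boundary coordinate
      have hnew : ∃ k0, u k0 ≠ 0 ∧ |w' k0| = lam k0 := by
        by_contra hnone
        push_neg at hnone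
        have hlt : ∀ j, u j ≠ 0 → |w' j| < lam j := fun j hj =>
          lt_of_le_of_ne (hw'le j) (hnone j hj)
        set S : Finset (Fin p) := Finset.univ.filter (fun j => u j ≠ 0) with hS
        have hSne : S.Nonempty := ⟨j1, by simp [hS, hj1]⟩
        have hSne' : (S.image (fun j => (lam j - |w' j|) / |u j|)).Nonempty :=
          hSne.image (fun j => (lam j - |w' j|) / |u j|)
        set ε := (S.image (fun j => (lam j - |w' j|) / |u j|)).min' hSne' with hε
        have hεpos : 0 < ε := by
          obtain ⟨j, hjS, hjval⟩ := Finset.mem_image.mp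
            ((S.image (fun j => (lam j - |w' j|) / |u j|)).min'_mem hSne')
          rw [hε, ← hjval]
          have hju : u j ≠ 0 := (Finset.mem_filter.mp hjS).2
          exact div_pos (by linarith [hlt j hju]) (abs_pos.mpr hju)
        have hmem : t0 + ε ∈ T := by
          refine ⟨by linarith [ht0T.1], ?_⟩
          intro j
          by_cases hju : u j = 0
          · simpa [hju] using hwle j
          · have h1 : w j + (t0 + ε) * u j = w' j + ε * u j := by rw [hw']; ring
            rw [h1]
            have h2 : |w' j + ε * u j| ≤ |w' j| + ε * |u j| := by
              calc |w' j + ε * u j| ≤ |w' j| + |ε * u j| := abs_add_le _ _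
                _ = |w' j| + ε * |u j| := by rw [abs_mul, abs_of_pos hεpos]
            have h3 : ε ≤ (lam j - |w' j|) / |u j| := by
              apply Finset.min'_le
              exact Finset.mem_image.mpr ⟨j, Finset.mem_filter.mpr ⟨Finset.mem_univ j, hju⟩, rfl⟩
            have h4 : ε * |u j| ≤ lam j - |w' j| := by
              rw [← div_mul_cancel₀ (lam j - |w' j|) (abs_ne_zero.mpr hju)]
              exact mul_le_mul_of_nonneg_right h3 (abs_nonneg _)
            linarith
        have := le_csSup hTbdd hmem
        rw [← ht0def] at this
        linarith
      obtain ⟨k0, hk0u, hk0eq⟩ := hnew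
      have hk0M : k0 ∉ M := fun h => hk0u (huM k0 h)
      -- recurse with M' = insert k0 M
      apply ih (insert k0 M) w'
      · rw [Finset.card_insert_of_notMem hk0M]; omega
      · obtain ⟨cw, hcw⟩ := hrow
        obtain ⟨cu, hcu⟩ := hurow
        refine ⟨cw + t0 • cu, ?_⟩
        rw [Matrix.mulVec_add, Matrix.mulVec_smul, hcw, hcu]
        funext j; simp [hw']
      · exact hw'le
      · intro j hj
        rcases Finset.mem_insert.mp hj with h | h
        · subst h; exact hk0eq
        · rw [hw'M j h]; exact hweq j h
      · obtain ⟨d, hd0, hXd, hsupp⟩ := hd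
        exact ⟨d, hd0, hXd, fun j hj => hsupp j (fun hjM => hj (Finset.mem_insert_of_mem hjM))⟩


lemma lasso_cont (X : Matrix (Fin n) (Fin p) ℝ) (y : Fin n → ℝ) (lam : Fin p → ℝ) :
    Continuous (fun b => lassoL X y lam b) := by
  apply Continuous.add
  · apply continuous_finset_sum
    intro i _
    apply Continuous.pow
    apply Continuous.sub continuous_const
    simp only [Matrix.mulVec, dotProduct]
    exact continuous_finset_sum _ fun j _ => continuous_const.mul (continuous_apply j)
  · apply Continuous.mul continuous_const
    exact continuous_finset_sum _ fun j _ => continuous_const.mul ((continuous_apply j).abs)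

/-- the "selector" linear map -/
def selMap (lam : Fin p → ℝ) : (Fin p → ℝ) →ₗ[ℝ] (Fin p → ℝ) where
  toFun b := fun j => if lam j = 0 then 0 else b j
  map_add' b1 b2 := by funext j; by_cases h : lam j = 0 <;> simp [h]
  map_smul' c b := by funext j; by_cases h : lam j = 0 <;> simp [h]

lemma exists_min (X : Matrix (Fin n) (Fin p) ℝ) (y : Fin n → ℝ) (lam : Fin p → ℝ)
    (hlam : ∀ j, 0 ≤ lam j)
    (hker : ∀ d : Fin p → ℝ, X.mulVec d = 0 → (∀ j, lam j ≠ 0 → d j = 0) → d = 0) :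
    ∃ b, ∀ b', lassoL X y lam b ≤ lassoL X y lam b' := by
  classical
  set T : (Fin p → ℝ) →ₗ[ℝ] ((Fin n → ℝ) × (Fin p → ℝ)) :=
    LinearMap.prod X.mulVecLin (selMap lam) with hTdef
  have hkerT : LinearMap.ker T = ⊥ := by
    rw [Submodule.eq_bot_iff]
    intro b hb
    rw [LinearMap.mem_ker] at hb
    have h1 : X.mulVec b = 0 := congrArg Prod.fst hb
    have h2 : selMap lam b = 0 := congrArg Prod.snd hb
    apply hker b h1
    intro j hj
    have := congrFun h2 j
    simpa [selMap, hj] using this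
  obtain ⟨K, hKpos, hK⟩ := T.exists_antilipschitzWith hkerT
  set c0 := lassoL X y lam 0 with hc0
  have hc0nn : 0 ≤ c0 := by
    rw [hc0]
    simp only [lassoL]
    have h1 : (0:ℝ) ≤ ∑ i, (y i - X.mulVec 0 i) ^ 2 := Finset.sum_nonneg fun i _ => sq_nonneg _
    have h2 : (0:ℝ) ≤ ∑ j, lam j * |(0:Fin p → ℝ) j| := by
      apply Finset.sum_nonneg; intro j _; exact mul_nonneg (hlam j) (abs_nonneg _)
    linarith
  set S : Set (Fin p → ℝ) := {b | lassoL X y lam b ≤ c0} with hS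
  have hSclosed : IsClosed S := isClosed_le (lasso_cont X y lam) continuous_const
  have h0S : (0 : Fin p → ℝ) ∈ S := by simp only [hS, Set.mem_setOf_eq]; exact le_refl _
  -- bounds on members of S
  have hbound1 : ∀ b ∈ S, ∀ i, (y i - X.mulVec b i)^2 ≤ c0 := by
    intro b hb i
    have hb' : lassoL X y lam b ≤ c0 := hb
    simp only [lassoL] at hb'
    have hsq : (y i - X.mulVec b i)^2 ≤ ∑ i, (y i - X.mulVec b i)^2 :=
      Finset.single_le_sum (f := fun i => (y i - X.mulVec b i)^2)
        (fun i _ => sq_nonneg _) (Finset.mem_univ i)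
    have hpen : (0:ℝ) ≤ ∑ j, lam j * |b j| :=
      Finset.sum_nonneg fun j _ => mul_nonneg (hlam j) (abs_nonneg _)
    linarith
  have hbound2 : ∀ b ∈ S, ∀ j, lam j * |b j| ≤ c0 / 2 := by
    intro b hb j
    have hb' : lassoL X y lam b ≤ c0 := hb
    simp only [lassoL] at hb'
    have hsqn : (0:ℝ) ≤ ∑ i, (y i - X.mulVec b i)^2 := Finset.sum_nonneg fun i _ => sq_nonneg _
    have := Finset.single_le_sum (f := fun j => lam j * |b j|)
      (fun j _ => mul_nonneg (hlam j) (abs_nonneg _)) (Finset.mem_univ j)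
    linarith
  set C2 : ℝ := ∑ k, (if lam k = 0 then 0 else c0 / (2 * lam k)) with hC2
  set C1 : ℝ := ‖y‖ + Real.sqrt c0 with hC1
  set C : ℝ := max C1 C2 with hC
  have hCnn : 0 ≤ C := by
    rw [hC, hC1]
    apply le_max_of_le_left
    positivity
  have hTb : ∀ b ∈ S, ‖T b‖ ≤ C := by
    intro b hb
    rw [Prod.norm_def]
    apply max_le
    · -- ‖X b‖ ≤ C1
      apply le_trans _ (le_max_left C1 C2)
      rw [pi_norm_le_iff_of_nonneg (by rw [hC1]; positivity)]
      intro i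
      have h1 := hbound1 b hb i
      have h2 : |y i - X.mulVec b i| ≤ Real.sqrt c0 := by
        rw [← Real.sqrt_sq_eq_abs]
        exact Real.sqrt_le_sqrt h1
      have h3 : |y i| ≤ ‖y‖ := by
        rw [← Real.norm_eq_abs]
        exact norm_le_pi_norm y i
      have : |X.mulVec b i| ≤ |y i| + |y i - X.mulVec b i| := by
        have := abs_sub_abs_le_abs_sub (y i) (y i - X.mulVec b i)
        have h4 := abs_add_le (X.mulVec b i - y i) (y i)
        calc |X.mulVec b i| = |X.mulVec b i - y i + y i| := by ring_nf
          _ ≤ |X.mulVec b i - y i| + |y i| := abs_add_le _ _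
          _ = |y i - X.mulVec b i| + |y i| := by rw [abs_sub_comm]
          _ = |y i| + |y i - X.mulVec b i| := by ring
      simp only [hTdef, LinearMap.prod_apply, Pi.prod, Function.prod, Matrix.mulVecLin_apply]
      rw [Real.norm_eq_abs]
      rw [hC1]
      linarith
    · -- ‖selMap b‖ ≤ C2
      apply le_trans _ (le_max_right C1 C2)
      have hC2nn : ∀ k, (0:ℝ) ≤ (if lam k = 0 then 0 else c0 / (2 * lam k)) := by
        intro k
        by_cases h : lam k = 0
        · simp [h]
        · simp only [h, if_false]
          have : 0 < lam k := lt_of_le_of_ne (hlam k) (Ne.symm h)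
          positivity
      rw [pi_norm_le_iff_of_nonneg (Finset.sum_nonneg fun k _ => hC2nn k)]
      intro j
      simp only [hTdef, LinearMap.prod_apply, Pi.prod]
      rw [Real.norm_eq_abs]
      have hterm : |selMap lam b j| ≤ (if lam j = 0 then 0 else c0 / (2 * lam j)) := by
        by_cases h : lam j = 0
        · simp [selMap, h]
        · simp only [selMap, LinearMap.coe_mk, AddHom.coe_mk, h, if_false]
          have hpos : 0 < lam j := lt_of_le_of_ne (hlam j) (Ne.symm h)
          have hbj := hbound2 b hb j
          rw [le_div_iff₀ (by positivity : (0:ℝ) < 2 * lam j)]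
          calc |b j| * (2 * lam j) = 2 * (lam j * |b j|) := by ring
            _ ≤ 2 * (c0 / 2) := by linarith
            _ = c0 := by ring
      calc |selMap lam b j| ≤ _ := hterm
        _ ≤ C2 := Finset.single_le_sum (fun k _ => hC2nn k) (Finset.mem_univ j)
  -- S is bounded hence compact
  have hSsub : S ⊆ Metric.closedBall 0 (K * C) := by
    intro b hb
    rw [Metric.mem_closedBall, dist_zero_right]
    have h1 : dist b 0 ≤ K * dist (T b) (T 0) := hK.le_mul_dist b 0
    rw [map_zero, dist_zero_right, dist_zero_right] at h1
    calc ‖b‖ ≤ K * ‖T b‖ := h1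
      _ ≤ K * C := by
        apply mul_le_mul_of_nonneg_left (hTb b hb) (NNReal.coe_nonneg K)
  have hScompact : IsCompact S :=
    (isCompact_closedBall (0 : Fin p → ℝ) (K * C)).of_isClosed_subset hSclosed hSsub
  obtain ⟨b0, hb0S, hb0min⟩ := hScompact.exists_isMinOn ⟨0, h0S⟩
    ((lasso_cont X y lam).continuousOn)
  refine ⟨b0, ?_⟩
  intro b'
  by_cases hb' : b' ∈ S
  · exact hb0min hb'
  · have h1 : lassoL X y lam b0 ≤ c0 := hb0S
    have h2 : ¬ (lassoL X y lam b' ≤ c0) := hb'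
    push_neg at h2
    linarith


end LassoAux

open LassoAux

/-- the Lasso solution is unique for every `y ∈ ℝ^n` iff
`col(X') ∩ 𝓑_M = ∅` for every `M ⊆ {1,…,p}` with `|M| > rk(X)`. -/
theorem lasso_unique_iff
    {n p : ℕ} (X : Matrix (Fin n) (Fin p) ℝ)
    (lam : Fin p → ℝ) (hlam : ∀ j, 0 ≤ lam j) :
    (∀ y : Fin n → ℝ, ∃! b : Fin p → ℝ,
        ∀ b' : Fin p → ℝ, lassoL X y lam b ≤ lassoL X y lam b')
    ↔ (∀ M : Finset (Fin p), X.rank < M.card →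
        {w : Fin p → ℝ | ∃ c : Fin n → ℝ, Xᵀ.mulVec c = w}
          ∩ boxFace lam M = ∅) := by
  classical
  constructor
  · -- uniqueness → empty intersection
    intro hU M hM
    rw [Set.eq_empty_iff_forall_notMem]
    rintro w ⟨⟨c, hc⟩, hbox⟩
    obtain ⟨d, hd0, hXd, hsupp⟩ := exists_ker_supported X M hM
    -- sign vector / base point
    set b : Fin p → ℝ := fun j => if j ∈ M then (if w j = lam j then 1 else -1) else 0 with hb
    have hwM : ∀ j ∈ M, w j = lam j ∨ w j = -(lam j) := by
      intro j hj
      have := hbox j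
      simp only [hj, if_true] at this
      tauto
    have hle : ∀ j, |w j| ≤ lam j := by
      intro j
      by_cases hj : j ∈ M
      · rcases hwM j hj with h | h <;> rw [h]
        · rw [abs_of_nonneg (hlam j)]
        · rw [abs_neg, abs_of_nonneg (hlam j)]
      · have := hbox j
        simp only [hj, if_false, Set.mem_Icc] at this
        exact abs_le.mpr this
    set y : Fin n → ℝ := X.mulVec b + c with hy
    have hres : y - X.mulVec b = c := by rw [hy]; abel
    have hw : Xᵀ.mulVec (y - X.mulVec b) = w := by rw [hres, hc]
    have heqb : ∀ j, w j * b j = lam j * |b j| := by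
      intro j
      by_cases hj : j ∈ M
      · by_cases hw' : w j = lam j
        · simp only [hb, hj, if_true, hw', if_true]
          simp
        · have hwneg : w j = -(lam j) := by
            rcases hwM j hj with h | h
            · exact absurd h hw'
            · exact h
          simp only [hb]
          rw [if_pos hj, if_neg hw', hwneg, abs_neg, abs_one]
          ring
      · simp [hb, hj]
    have hmin1 : ∀ b', lassoL X y lam b ≤ lassoL X y lam b' := by
      apply kkt_suff X y lam b
      · rw [hw]; exact hle
      · rw [hw]; exact heqb
    -- perturbed point
    set Sd := ∑ j, |d j| with hSd
    have hSdnn : 0 ≤ Sd := Finset.sum_nonneg fun j _ => abs_nonneg _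
    set t : ℝ := 1 / (1 + Sd) with ht
    have htpos : 0 < t := by rw [ht]; positivity
    have htd : ∀ j, t * |d j| < 1 := by
      intro j
      have h1 : |d j| ≤ Sd :=
        Finset.single_le_sum (f := fun j => |d j|) (fun j _ => abs_nonneg _) (Finset.mem_univ j)
      rw [ht, div_mul_eq_mul_div, one_mul, div_lt_one (by linarith)]
      linarith
    set b2 : Fin p → ℝ := b + t • d with hb2
    have hfit : X.mulVec b2 = X.mulVec b := by
      rw [hb2, Matrix.mulVec_add, Matrix.mulVec_smul, hXd]
      simp
    have hres2 : y - X.mulVec b2 = c := by rw [hfit, hres]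
    have hw2 : Xᵀ.mulVec (y - X.mulVec b2) = w := by rw [hres2, hc]
    have heqb2 : ∀ j, w j * b2 j = lam j * |b2 j| := by
      intro j
      by_cases hj : j ∈ M
      · by_cases hw' : w j = lam j
        · have hb2j : b2 j = 1 + t * d j := by
            simp [hb2, hb, hj, hw']
          have hpos : 0 < b2 j := by
            rw [hb2j]
            have := htd j
            have h2 : t * d j ≤ |t * d j| := le_abs_self _
            have h3 : |t * d j| = t * |d j| := by rw [abs_mul, abs_of_pos htpos]
            have h4 : -(t * |d j|) ≤ t * d j := by
              rw [← h3]; exact neg_abs_le _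
            linarith
          rw [abs_of_pos hpos, hw']
        · have hwneg : w j = -(lam j) := by
            rcases hwM j hj with h | h
            · exact absurd h hw'
            · exact h
          have hb2j : b2 j = -1 + t * d j := by
            simp [hb2, hb, hj, hw']
          have hneg : b2 j < 0 := by
            rw [hb2j]
            have := htd j
            have h3 : |t * d j| = t * |d j| := by rw [abs_mul, abs_of_pos htpos]
            have h2 : t * d j ≤ |t * d j| := le_abs_self _
            linarith
          rw [abs_of_neg hneg, hwneg]
          ring
      · have : d j = 0 := hsupp j hj
        simp [hb2, hb, hj, this]
    have hmin2 : ∀ b', lassoL X y lam b2 ≤ lassoL X y lam b' := by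
      apply kkt_suff X y lam b2
      · rw [hw2]; exact hle
      · rw [hw2]; exact heqb2
    obtain ⟨bu, _, huniq⟩ := hU y
    have h1 := huniq b hmin1
    have h2 := huniq b2 hmin2
    have : b2 = b := h2.trans h1.symm
    obtain ⟨j0, hj0⟩ : ∃ j0, d j0 ≠ 0 := by
      by_contra hall; push_neg at hall; exact hd0 (funext hall)
    have := congrFun this j0
    simp only [hb2, Pi.add_apply, Pi.smul_apply, smul_eq_mul] at this
    have : t * d j0 = 0 := by linarith
    rcases mul_eq_zero.mp this with h | h
    · exact absurd h (ne_of_gt htpos)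
    · exact hj0 h
  · -- empty intersection → uniqueness
    intro hB y
    have hker : ∀ d : Fin p → ℝ, X.mulVec d = 0 → (∀ j, lam j ≠ 0 → d j = 0) → d = 0 := by
      intro d hXd hdz
      by_contra hd0
      set Z : Finset (Fin p) := Finset.univ.filter (fun j => lam j = 0) with hZ
      obtain ⟨M', w', hM'card, hw'row, hw'box⟩ := aug X lam hlam p Z 0
        (by omega)
        ⟨0, by simp⟩
        (by intro j; simp [hlam j])
        (by intro j hj
            have : lam j = 0 := (Finset.mem_filter.mp hj).2
            simp [this])
        ⟨d, hd0, hXd, by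
          intro j hj
          apply hdz
          intro hlamj
          exact hj (Finset.mem_filter.mpr ⟨Finset.mem_univ j, hlamj⟩)⟩
      have := hB M' hM'card
      rw [Set.eq_empty_iff_forall_notMem] at this
      exact this w' ⟨hw'row, hw'box⟩
    obtain ⟨b0, hb0⟩ := exists_min X y lam hlam hker
    refine ⟨b0, hb0, ?_⟩
    intro b1 hb1
    by_contra hne
    obtain ⟨hfit, heq2⟩ := two_mins X y lam hlam b1 b0 hb1 hb0
    obtain ⟨hle, heq1⟩ := kkt_nec X y lam hlam b1 hb1
    set w := Xᵀ.mulVec (y - X.mulVec b1) with hw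
    set d : Fin p → ℝ := b1 - b0 with hd
    have hd0 : d ≠ 0 := by
      rw [hd, sub_ne_zero]; exact hne
    have hXd : X.mulVec d = 0 := by
      rw [hd, Matrix.mulVec_sub, hfit]; simp
    set M0 : Finset (Fin p) := Finset.univ.filter (fun j => |w j| = lam j) with hM0
    have hzero : ∀ (b : Fin p → ℝ), (∀ j, w j * b j = lam j * |b j|) →
        ∀ j ∉ M0, b j = 0 := by
      intro b hbeq j hj
      have hne' : |w j| ≠ lam j := by
        intro h; exact hj (Finset.mem_filter.mpr ⟨Finset.mem_univ j, h⟩)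
      by_contra hbj
      have habs : 0 < |b j| := abs_pos.mpr hbj
      have h1 : w j * b j ≤ |w j| * |b j| := by
        calc w j * b j ≤ |w j * b j| := le_abs_self _
          _ = |w j| * |b j| := abs_mul _ _
      have h2 : |w j| * |b j| ≤ lam j * |b j| :=
        mul_le_mul_of_nonneg_right (hle j) (abs_nonneg _)
      have h3 : lam j * |b j| ≤ |w j| * |b j| := by
        rw [← hbeq j] at h2 ⊢
        linarith [hbeq j, h1]
      exact hne' (le_antisymm (hle j) ((mul_le_mul_iff_left₀ habs).mp h3)).symm.symm
    have hsupp : ∀ j ∉ M0, d j = 0 := by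
      intro j hj
      have h1 : b1 j = 0 := hzero b1 heq1 j hj
      have h0 : b0 j = 0 := hzero b0 heq2 j hj
      simp [hd, h1, h0]
    obtain ⟨M', w', hM'card, hw'row, hw'box⟩ := aug X lam hlam p M0 w
      (by omega)
      ⟨y - X.mulVec b1, rfl⟩
      hle
      (by intro j hj; exact (Finset.mem_filter.mp hj).2)
      ⟨d, hd0, hXd, hsupp⟩
    have := hB M' hM'card
    rw [Set.eq_empty_iff_forall_notMem] at this
    exact this w' ⟨hw'row, hw'box⟩


end
end

section
/- Let X ∈ ℝ^{n×p} be arbitrary, y ∈ ℝ^n, and λ_1,…,λ_p ≥ 0 (possibly non-uniform, possibly with some λ_j = 0). If b and b̃ are both global minimizers of L over ℝ^p, then Xb = Xb̃; that is, the Lasso fit is unique even when the Lasso solution is not. -/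
open MeasureTheory Matrix BigOperators

noncomputable section

/-- the Lasso fit `Xb` is the same for all global minimizers `b`
of `L`, even when the Lasso solution itself is not unique. -/
theorem lasso_fit_unique
    {n p : ℕ} (X : Matrix (Fin n) (Fin p) ℝ) (y : Fin n → ℝ)
    (lam : Fin p → ℝ) (hlam : ∀ j, 0 ≤ lam j)
    (b btilde : Fin p → ℝ)
    (hb : ∀ b' : Fin p → ℝ, lassoL X y lam b ≤ lassoL X y lam b')
    (hbtilde : ∀ b' : Fin p → ℝ, lassoL X y lam btilde ≤ lassoL X y lam b') :
    X.mulVec b = X.mulVec btilde := by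
  set c : Fin p → ℝ := fun j => (b j + btilde j) / 2 with hc
  have hmc : ∀ i, X.mulVec c i = (X.mulVec b i + X.mulVec btilde i) / 2 := by
    intro i
    simp only [Matrix.mulVec, dotProduct, hc]
    rw [← Finset.sum_add_distrib, Finset.sum_div]
    exact Finset.sum_congr rfl fun j _ => by ring
  -- quadratic part identity
  have hquad : (∑ i, (y i - X.mulVec c i) ^ 2) =
      ((∑ i, (y i - X.mulVec b i) ^ 2) + (∑ i, (y i - X.mulVec btilde i) ^ 2)) / 2
        - (∑ i, (X.mulVec b i - X.mulVec btilde i) ^ 2) / 4 := by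
    rw [← Finset.sum_add_distrib, Finset.sum_div, Finset.sum_div, ← Finset.sum_sub_distrib]
    refine Finset.sum_congr rfl fun i _ => ?_
    rw [hmc i]; ring
  -- penalty part inequality
  have hpen : (∑ j, lam j * |c j|) ≤
      ((∑ j, lam j * |b j|) + (∑ j, lam j * |btilde j|)) / 2 := by
    rw [← Finset.sum_add_distrib, Finset.sum_div]
    refine Finset.sum_le_sum fun j _ => ?_
    have h1 : |c j| ≤ (|b j| + |btilde j|) / 2 := by
      simp only [hc]
      rw [abs_div]
      have := abs_add_le (b j) (btilde j)
      simp only [abs_two]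
      linarith
    calc lam j * |c j| ≤ lam j * ((|b j| + |btilde j|) / 2) :=
          mul_le_mul_of_nonneg_left h1 (hlam j)
      _ = (lam j * |b j| + lam j * |btilde j|) / 2 := by ring
  have hL : lassoL X y lam c ≤
      (lassoL X y lam b + lassoL X y lam btilde) / 2
        - (∑ i, (X.mulVec b i - X.mulVec btilde i) ^ 2) / 4 := by
    unfold lassoL
    rw [hquad]
    linarith
  have h1 := hb c
  have h2 := hbtilde b
  have h3 := hb btilde
  have hsum : (∑ i, (X.mulVec b i - X.mulVec btilde i) ^ 2) ≤ 0 := by linarith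
  have hzero : ∀ i ∈ Finset.univ, (X.mulVec b i - X.mulVec btilde i) ^ 2 = 0 := by
    intro i _
    have hnn : ∀ i ∈ (Finset.univ : Finset (Fin n)),
        0 ≤ (X.mulVec b i - X.mulVec btilde i) ^ 2 := fun i _ => sq_nonneg _
    have := (Finset.sum_eq_zero_iff_of_nonneg hnn).mp
      (le_antisymm hsum (Finset.sum_nonneg hnn))
    exact this i (Finset.mem_univ i)
  funext i
  have := hzero i (Finset.mem_univ i)
  have := pow_eq_zero_iff (n := 2) (by norm_num) |>.mp this
  linarith

end
end

section
/- Let X ∈ ℝ^{n×p} be arbitrary and λ_1,…,λ_p ≥ 0. For b ∈ ℝ^p define S̄(b) = X'Xb + ∏_{j=1}^p B_j(b_j), where B_j(b_j) = {sgn(b_j)λ_j} if b_j ≠ 0 and B_j(b_j) = [−λ_j, λ_j] if b_j = 0. If b, b' ∈ ℝ^p satisfy b − b' ∈ ker(X) and {sgn(b_j), sgn(b'_j)} ≠ {−1, 1} for every j = 1,…,p, then S̄(b) ∩ S̄(b') ≠ ∅. -/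
open MeasureTheory Matrix BigOperators

noncomputable section

/-- The set `S̄(b) = X'Xb + ∏_j B_j(b_j)` with `B_j(b_j) = {sgn(b_j)λ_j}` if
`b_j ≠ 0` and `B_j(b_j) = [−λ_j, λ_j]` if `b_j = 0`. -/
def Sbar {n p : ℕ} (X : Matrix (Fin n) (Fin p) ℝ) (lam : Fin p → ℝ)
    (b : Fin p → ℝ) : Set (Fin p → ℝ) :=
  {w | ∀ j : Fin p,
    (b j ≠ 0 → w j = (Xᵀ * X).mulVec b j + Real.sign (b j) * lam j)
    ∧ (b j = 0 → w j - (Xᵀ * X).mulVec b j ∈ Set.Icc (-(lam j)) (lam j))}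

lemma sign_mul_mem_Icc (x y : ℝ) (hy : 0 ≤ y) :
    Real.sign x * y ∈ Set.Icc (-y) y := by
  rcases lt_trichotomy x 0 with h | h | h
  · rw [Real.sign_of_neg h]; constructor <;> nlinarith
  · rw [h, Real.sign_zero]; constructor <;> nlinarith
  · rw [Real.sign_of_pos h]; constructor <;> nlinarith

/-- if `b − b' ∈ ker(X)` and `{sgn(b_j), sgn(b'_j)} ≠ {−1, 1}`
for every `j`, then `S̄(b) ∩ S̄(b') ≠ ∅`. -/
theorem Sbar_overlap
    {n p : ℕ} (X : Matrix (Fin n) (Fin p) ℝ)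
    (lam : Fin p → ℝ) (hlam : ∀ j, 0 ≤ lam j)
    (b b' : Fin p → ℝ)
    (hker : X.mulVec (b - b') = 0)
    (hsgn : ∀ j : Fin p,
      ({Real.sign (b j), Real.sign (b' j)} : Set ℝ) ≠ ({-1, 1} : Set ℝ)) :
    (Sbar X lam b ∩ Sbar X lam b').Nonempty := by
  have heq : (Xᵀ * X).mulVec b = (Xᵀ * X).mulVec b' := by
    have h : (Xᵀ * X).mulVec (b - b') = 0 := by
      rw [← Matrix.mulVec_mulVec, hker, Matrix.mulVec_zero]
    have := Matrix.mulVec_sub (Xᵀ * X) b b'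
    rw [h] at this
    funext j
    have := congrFun this.symm j
    simp only [Pi.zero_apply, Pi.sub_apply] at this
    linarith
  -- signs agree when both nonzero
  have hsign_eq : ∀ j, b j ≠ 0 → b' j ≠ 0 → Real.sign (b j) = Real.sign (b' j) := by
    intro j hb hb'
    by_contra hne
    apply hsgn j
    have h1 := Real.sign_apply_eq_of_ne_zero _ hb
    have h2 := Real.sign_apply_eq_of_ne_zero _ hb'
    rcases h1 with h1 | h1 <;> rcases h2 with h2 | h2 <;> rw [h1, h2] <;>
      first
        | rfl
        | exact Set.pair_comm _ _
        | exact absurd (h1.trans h2.symm) hne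
  refine ⟨fun j => (Xᵀ * X).mulVec b j +
      (if b j ≠ 0 then Real.sign (b j) else Real.sign (b' j)) * lam j, ?_, ?_⟩
  · intro j
    constructor
    · intro hb
      simp [hb]
    · intro hb
      simp only [hb, ne_eq, not_true_eq_false, if_false, add_sub_cancel_left]
      exact sign_mul_mem_Icc _ _ (hlam j)
  · intro j
    constructor
    · intro hb'
      rw [← heq]
      by_cases hb : b j = 0
      · simp [hb]
      · simp only [hb, ne_eq, not_false_eq_true, if_true, hsign_eq j hb hb']
    · intro hb'
      rw [← heq, add_sub_cancel_left]
      by_cases hb : b j = 0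
      · simp only [hb, ne_eq, not_true_eq_false, if_false]
        exact sign_mul_mem_Icc _ _ (hlam j)
      · simp only [ne_eq, hb, not_false_eq_true, if_true]
        exact sign_mul_mem_Icc _ _ (hlam j)

end
end
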